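/- arXiv:math/9704202 — 7 statements merged into one kernel-verified Lean document; each statement's English description precedes it below -/
import Mathlib

section
/- A uniformly discrete space Z of bounded geometry is non-amenable if and only if for every C > 0 there exists r > 0 such that for every finite subset A of Z, |A| ≤ C·|∂_r(A)|. -/
/-- The closed `r`-neighborhood of a set `A`. -/
def nbhd {Z : Type*} [MetricSpace Z] (r : ℝ) (A : Set Z) : Set Z :=
  {z | ∃ a ∈ A, dist z a ≤ r}

/-- The `r`-boundary of `A`: points outside `A` within distance `r` of `A`. -/
def bdry {Z : Type*} [MetricSpace Z] (r : ℝ) (A : Set Z) : Set Z :=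
  nbhd r A \ A

/-- Uniformly discrete metric space. -/
def UniformlyDiscrete (Z : Type*) [MetricSpace Z] : Prop :=
  ∃ r > (0 : ℝ), ∀ x y : Z, dist x y < r → x = y

/-- Bounded geometry: balls of radius `r` have at most `N_r` points. -/
def BoundedGeometry (Z : Type*) [MetricSpace Z] : Prop :=
  ∀ r : ℝ, ∃ N : ℕ, ∀ x : Z, {y : Z | dist y x ≤ r}.Finite ∧
    {y : Z | dist y x ≤ r}.ncard ≤ N

/-- Amenability: existence of a regular (Følner) sequence of finite nonempty sets
whose relative `r`-boundaries tend to `0` for every `r > 0`. -/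
def Amenable (Z : Type*) [MetricSpace Z] : Prop :=
  ∃ S : ℕ → Set Z, (∀ i, (S i).Finite ∧ (S i).Nonempty) ∧
    ∀ r > (0 : ℝ), Filter.Tendsto
      (fun i => ((bdry r (S i)).ncard : ℝ) / ((S i).ncard : ℝ))
      Filter.atTop (nhds 0)

section Aux

variable {Z : Type*} [MetricSpace Z]

lemma subset_nbhd' {r : ℝ} (hr : 0 ≤ r) (A : Set Z) : A ⊆ nbhd r A :=
  fun a ha => ⟨a, ha, by simpa using hr⟩

lemma nbhd_mono' {r s : ℝ} (h : r ≤ s) (A : Set Z) : nbhd r A ⊆ nbhd s A :=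
  fun _ ⟨a, ha, hd⟩ => ⟨a, ha, hd.trans h⟩

lemma nbhd_finite' (hbg : BoundedGeometry Z) {A : Set Z} (hA : A.Finite) (r : ℝ) :
    (nbhd r A).Finite := by
  obtain ⟨N, hN⟩ := hbg r
  have hsub : nbhd r A ⊆ ⋃ a ∈ A, {z | dist z a ≤ r} := by
    rintro z ⟨a, ha, hd⟩; exact Set.mem_biUnion ha hd
  exact ((hA.biUnion (fun a _ => (hN a).1)).subset hsub)

lemma bdry_finite' (hbg : BoundedGeometry Z) {A : Set Z} (hA : A.Finite) (r : ℝ) :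
    (bdry r A).Finite :=
  (nbhd_finite' hbg hA r).subset Set.diff_subset

lemma nbhd_nbhd' {r s : ℝ} (A : Set Z) : nbhd r (nbhd s A) ⊆ nbhd (r + s) A := by
  rintro z ⟨b, ⟨a, ha, hba⟩, hzb⟩
  exact ⟨a, ha, (dist_triangle z b a).trans (add_le_add hzb hba)⟩

lemma ncard_nbhd' (hbg : BoundedGeometry Z) {A : Set Z} (hA : A.Finite) {r : ℝ} (hr : 0 ≤ r) :
    (nbhd r A).ncard = (bdry r A).ncard + A.ncard :=
  (Set.ncard_diff_add_ncard_of_subset (subset_nbhd' hr A) (nbhd_finite' hbg hA r)).symm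

lemma growth' (hbg : BoundedGeometry Z) {C r : ℝ} (hC : 0 < C) (hr : 0 < r)
    (H : ∀ A : Set Z, A.Finite → (A.ncard : ℝ) ≤ C * ((bdry r A).ncard : ℝ)) :
    ∀ k : ℕ, ∀ A : Set Z, A.Finite →
      (1 + 1/C) ^ k * (A.ncard : ℝ) ≤ ((nbhd (k * r) A).ncard : ℝ) := by
  intro k
  induction k with
  | zero =>
    intro A hA
    simp only [pow_zero, one_mul, Nat.cast_zero, zero_mul]
    exact_mod_cast Set.ncard_le_ncard (subset_nbhd' le_rfl A) (nbhd_finite' hbg hA 0)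
  | succ k ih =>
    intro A hA
    set B := nbhd ((k : ℝ) * r) A with hB
    have hBfin : B.Finite := nbhd_finite' hbg hA _
    have h1 : (1 + 1/C) * ((B.ncard : ℝ)) ≤ ((nbhd r B).ncard : ℝ) := by
      have hsplit := ncard_nbhd' hbg hBfin hr.le
      have hH := H B hBfin
      have : (1/C) * (B.ncard : ℝ) ≤ ((bdry r B).ncard : ℝ) := by
        rw [div_mul_eq_mul_div, one_mul, div_le_iff₀ hC, mul_comm]
        exact hH
      have : (B.ncard : ℝ) + (1/C) * (B.ncard : ℝ) ≤ ((bdry r B).ncard : ℝ) + (B.ncard : ℝ) := by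
        linarith
      calc (1 + 1/C) * (B.ncard : ℝ) = (B.ncard : ℝ) + (1/C) * (B.ncard : ℝ) := by ring
        _ ≤ ((bdry r B).ncard : ℝ) + (B.ncard : ℝ) := this
        _ = ((nbhd r B).ncard : ℝ) := by exact_mod_cast hsplit.symm
    have h2 : nbhd r B ⊆ nbhd (((k : ℕ) + 1 : ℕ) * r) A := by
      have := nbhd_nbhd' (r := r) (s := (k : ℝ) * r) A
      intro z hz
      have hz' := this hz
      have : (r + (k : ℝ) * r) = ((k + 1 : ℕ) : ℝ) * r := by push_cast; ring
      rwa [this] at hz'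
    have h3 : ((nbhd r B).ncard : ℝ) ≤ ((nbhd (((k + 1 : ℕ) : ℝ) * r) A).ncard : ℝ) := by
      exact_mod_cast Set.ncard_le_ncard h2 (nbhd_finite' hbg hA _)
    have hCpos : (0 : ℝ) ≤ 1 + 1/C := by positivity
    calc (1 + 1/C) ^ (k + 1) * (A.ncard : ℝ)
        = (1 + 1/C) * ((1 + 1/C) ^ k * (A.ncard : ℝ)) := by ring
      _ ≤ (1 + 1/C) * (B.ncard : ℝ) := by
          exact mul_le_mul_of_nonneg_left (ih A hA) hCpos
      _ ≤ ((nbhd r B).ncard : ℝ) := h1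
      _ ≤ _ := h3

/-- Upgrade a single isoperimetric constant to arbitrary constants. -/
lemma upgrade' (hbg : BoundedGeometry Z) {C r : ℝ} (hC : 0 < C) (hr : 0 < r)
    (H : ∀ A : Set Z, A.Finite → (A.ncard : ℝ) ≤ C * ((bdry r A).ncard : ℝ)) :
    ∀ C' > (0 : ℝ), ∃ r' > (0 : ℝ), ∀ A : Set Z, A.Finite →
      (A.ncard : ℝ) ≤ C' * ((bdry r' A).ncard : ℝ) := by
  intro C' hC'
  obtain ⟨k₀, hk₀⟩ := pow_unbounded_of_one_lt (1 + 1/C') (by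
    have : 0 < 1/C := by positivity
    linarith : (1:ℝ) < 1 + 1/C)
  set k := max k₀ 1 with hk
  have hkpow : 1 + 1/C' ≤ (1 + 1/C) ^ k := by
    calc (1 + 1/C') ≤ (1 + 1/C) ^ k₀ := hk₀.le
      _ ≤ (1 + 1/C) ^ k := by
          apply pow_le_pow_right₀ (le_add_of_nonneg_right (by positivity)) (le_max_left _ _)
  refine ⟨k * r, by positivity, ?_⟩
  intro A hA
  have hgrow := growth' hbg hC hr H k A hA
  have hsplit := ncard_nbhd' hbg hA (r := (k : ℝ) * r) (by positivity)
  have hsplit' : ((nbhd ((k : ℝ) * r) A).ncard : ℝ)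
      = ((bdry ((k : ℝ) * r) A).ncard : ℝ) + (A.ncard : ℝ) := by exact_mod_cast hsplit
  have ha : (0:ℝ) ≤ (A.ncard : ℝ) := by positivity
  have hchain : (1 + 1/C') * (A.ncard : ℝ) ≤ ((bdry ((k : ℝ) * r) A).ncard : ℝ) + (A.ncard : ℝ) := by
    calc (1 + 1/C') * (A.ncard : ℝ) ≤ (1 + 1/C) ^ k * (A.ncard : ℝ) :=
          mul_le_mul_of_nonneg_right hkpow ha
      _ ≤ ((nbhd ((k : ℝ) * r) A).ncard : ℝ) := hgrow
      _ = _ := hsplit'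
  have h1 : (1/C') * (A.ncard : ℝ) ≤ ((bdry ((k : ℝ) * r) A).ncard : ℝ) := by nlinarith
  rw [div_mul_eq_mul_div, one_mul, div_le_iff₀ hC', mul_comm] at h1
  exact h1

end Aux

/-- A uniformly discrete space of bounded geometry is non-amenable iff for every
`C > 0` there is `r > 0` with `|A| ≤ C·|∂_r(A)|` for every finite subset `A`. -/
theorem stmt2 {Z : Type*} [MetricSpace Z]
    (hud : UniformlyDiscrete Z) (hbg : BoundedGeometry Z) :
    ¬ Amenable Z ↔ ∀ C > (0 : ℝ), ∃ r > (0 : ℝ), ∀ A : Set Z, A.Finite →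
      (A.ncard : ℝ) ≤ C * ((bdry r A).ncard : ℝ) := by
  constructor
  · -- ¬Amenable → RHS
    intro hna
    by_contra hrhs
    push_neg at hrhs
    -- hrhs : ∃ C > 0, ∀ r > 0, ∃ A, A.Finite ∧ C * |bdry r A| < |A|  — but we need full negation
    obtain ⟨C₀, hC₀, hbad⟩ := hrhs
    -- If for *some* C,r the bound held, upgrade' would contradict hbad with C₀.
    have key : ∀ C > (0:ℝ), ∀ r > (0:ℝ), ∃ A : Set Z, A.Finite ∧
        C * ((bdry r A).ncard : ℝ) < (A.ncard : ℝ) := by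
      intro C hC r hr
      by_contra hgood
      push_neg at hgood
      have hgood' : ∀ A : Set Z, A.Finite → (A.ncard : ℝ) ≤ C * ((bdry r A).ncard : ℝ) := by
        intro A hA; exact hgood A hA
      obtain ⟨r', hr', hbound⟩ := upgrade' hbg hC hr hgood' C₀ hC₀
      obtain ⟨A, hAfin, hAlt⟩ := hbad r' hr'
      exact absurd (hbound A hAfin) (not_le.mpr hAlt)
    -- Build a Følner sequence
    apply hna
    have hsel : ∀ n : ℕ, ∃ A : Set Z, A.Finite ∧
        ((n : ℝ) + 1) * ((bdry ((n : ℝ) + 1) A).ncard : ℝ) < (A.ncard : ℝ) := by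
      intro n
      exact key ((n : ℝ) + 1) (by positivity) ((n : ℝ) + 1) (by positivity)
    choose S hSfin hSlt using hsel
    refine ⟨S, ?_, ?_⟩
    · intro i
      refine ⟨hSfin i, ?_⟩
      apply Set.nonempty_of_ncard_ne_zero
      intro h0
      have := hSlt i
      rw [h0] at this
      simp at this
      have : (0:ℝ) ≤ ((i : ℝ) + 1) * ((bdry ((i : ℝ) + 1) (S i)).ncard : ℝ) := by positivity
      linarith [hSlt i, (by rw [h0]; simp : ((S i).ncard : ℝ) = 0)]
    · intro r hr
      have hpos : ∀ i, (0:ℝ) < ((S i).ncard : ℝ) := by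
        intro i
        have h0 : (0:ℝ) ≤ ((i : ℝ) + 1) * ((bdry ((i : ℝ) + 1) (S i)).ncard : ℝ) := by positivity
        linarith [hSlt i]
      refine squeeze_zero' (g := fun i : ℕ => 1 / ((i : ℝ) + 1))
        (Filter.Eventually.of_forall fun i => by positivity) ?_
        tendsto_one_div_add_atTop_nhds_zero_nat
      · have hev : ∀ᶠ i : ℕ in Filter.atTop, r ≤ (i : ℝ) + 1 := by
          filter_upwards [Filter.eventually_ge_atTop ⌈r⌉₊] with i hi
          calc r ≤ (⌈r⌉₊ : ℝ) := Nat.le_ceil r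
            _ ≤ (i : ℝ) := by exact_mod_cast hi
            _ ≤ (i : ℝ) + 1 := by linarith
        filter_upwards [hev] with i hi
        have hsub : bdry r (S i) ⊆ bdry ((i : ℝ) + 1) (S i) :=
          Set.diff_subset_diff_left (nbhd_mono' hi _)
        have hmono : ((bdry r (S i)).ncard : ℝ) ≤ ((bdry ((i : ℝ) + 1) (S i)).ncard : ℝ) := by
          exact_mod_cast Set.ncard_le_ncard hsub (bdry_finite' hbg (hSfin i) _)
        have hlt := hSlt i
        have hp := hpos i
        rw [div_le_div_iff₀ hp (by positivity : (0:ℝ) < (i : ℝ) + 1)]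
        calc ((bdry r (S i)).ncard : ℝ) * ((i : ℝ) + 1)
            ≤ ((bdry ((i : ℝ) + 1) (S i)).ncard : ℝ) * ((i : ℝ) + 1) := by
              exact mul_le_mul_of_nonneg_right hmono (by positivity)
          _ ≤ ((S i).ncard : ℝ) := by nlinarith
          _ = 1 * ((S i).ncard : ℝ) := (one_mul _).symm
  · -- RHS → ¬Amenable
    intro hrhs ham
    obtain ⟨S, hS, hfol⟩ := ham
    obtain ⟨r, hr, hbound⟩ := hrhs 1 one_pos
    have hge : ∀ i, 1 ≤ ((bdry r (S i)).ncard : ℝ) / ((S i).ncard : ℝ) := by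
      intro i
      have hpos : (0:ℝ) < ((S i).ncard : ℝ) := by
        have := (hS i).2
        have hne : (S i).ncard ≠ 0 := Set.ncard_ne_zero_of_mem this.choose_spec (hS i).1
        positivity
      rw [le_div_iff₀ hpos, one_mul]
      have := hbound (S i) (hS i).1
      linarith
    have hev : ∀ᶠ i : ℕ in Filter.atTop,
        ((bdry r (S i)).ncard : ℝ) / ((S i).ncard : ℝ) < 1 :=
      (hfol r hr).eventually_lt_const one_pos
    obtain ⟨i, hi⟩ := hev.exists
    exact absurd (hge i) (not_le.mpr hi)
end

section
/- Let f : X → Y be a coarse Lipschitz map between uniformly discrete spaces of bounded geometry, and suppose there exists r > 0 such that for every finite subset S of Y, |f⁻¹(S)| ≤ |N_r(S)|. Then there exists an injective map φ : X → Y with d(φ(x), f(x)) ≤ r for all x ∈ X. -/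
open scoped ENNReal

/-- Coarse Lipschitz map. -/
def CoarseLipschitz {X Y : Type*} [MetricSpace X] [MetricSpace Y] (f : X → Y) : Prop :=
  ∃ K L : ℝ, ∀ x₁ x₂ : X, dist (f x₁) (f x₂) ≤ K * dist x₁ x₂ + L

/-- If `f : X → Y` is coarse Lipschitz between uniformly discrete bounded-geometry
spaces and for some `r > 0` every finite `S ⊆ Y` satisfies `|f⁻¹(S)| ≤ |N_r(S)|`,
then there is an injection `φ` with `d(φ x, f x) ≤ r` for all `x`. -/
theorem stmt5 {X Y : Type*} [MetricSpace X] [MetricSpace Y]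
    (hudX : UniformlyDiscrete X) (hbgX : BoundedGeometry X)
    (hudY : UniformlyDiscrete Y) (hbgY : BoundedGeometry Y)
    (f : X → Y) (hf : CoarseLipschitz f) (r : ℝ) (hr : 0 < r)
    (hall : ∀ S : Set Y, S.Finite →
      ((f ⁻¹' S).encard : ℝ≥0∞) ≤ ((nbhd r S).encard : ℝ≥0∞)) :
    ∃ φ : X → Y, Function.Injective φ ∧ ∀ x : X, dist (φ x) (f x) ≤ r := by
  classical
  obtain ⟨N, hN⟩ := hbgY r
  set t : X → Finset Y := fun x => (hN (f x)).1.toFinset with ht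
  have hmem : ∀ x y, y ∈ t x ↔ dist y (f x) ≤ r := by
    intro x y
    simp [ht, Set.Finite.mem_toFinset]
  have hhall : ∀ s : Finset X, s.card ≤ (s.biUnion t).card := by
    intro s
    have hSfin : (f '' (s : Set X)).Finite := (s.finite_toSet.image f)
    have key := hall (f '' (s : Set X)) hSfin
    -- nbhd r (f '' s) = ↑(s.biUnion t)
    have hnb : nbhd r (f '' (s : Set X)) = ↑(s.biUnion t) := by
      ext y
      simp only [nbhd, Set.mem_setOf_eq, Finset.coe_biUnion, Set.mem_iUnion,
        Set.mem_image, Finset.mem_coe]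
      constructor
      · rintro ⟨a, ⟨x, hx, rfl⟩, hd⟩
        exact ⟨x, hx, (hmem x y).2 hd⟩
      · rintro ⟨x, hx, hy⟩
        exact ⟨f x, ⟨x, hx, rfl⟩, (hmem x y).1 hy⟩
    have hsub : (s : Set X) ⊆ f ⁻¹' (f '' (s : Set X)) :=
      (s : Set X).subset_preimage_image f
    have h1 : (s : Set X).encard ≤ (f ⁻¹' (f '' (s : Set X))).encard :=
      Set.encard_le_encard hsub
    have h2 : (f ⁻¹' (f '' (s : Set X))).encard ≤ (nbhd r (f '' (s : Set X))).encard := by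
      exact_mod_cast key
    have h3 : (nbhd r (f '' (s : Set X))).encard = ((s.biUnion t : Finset Y) : Set Y).encard := by
      rw [hnb]
    have : (s : Set X).encard ≤ ((s.biUnion t : Finset Y) : Set Y).encard :=
      h1.trans (h2.trans_eq h3)
    rwa [Set.encard_coe_eq_coe_finsetCard, Set.encard_coe_eq_coe_finsetCard,
      Nat.cast_le] at this
  obtain ⟨φ, hinj, hφ⟩ := (Finset.all_card_le_biUnion_card_iff_exists_injective t).mp hhall
  exact ⟨φ, hinj, fun x => (hmem x (φ x)).1 (hφ x)⟩
end

section
/- Let X and Y be uniformly discrete metric spaces and f : X → Y a quasi-isometry (coarse equivalence). If there exist injections φ : X → Y and ψ : Y → X, each at bounded distance from f and from a coarse inverse g of f respectively, then there exists a bijection h : X → Y at bounded distance from f; consequently h is a bilipschitz equivalence. -/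
open scoped ENNReal

/-!
Schröder–Bernstein preserves any pointwise relation satisfied by both injections. Applied to
`dist y (f x) ≤ C`, which holds for the pairs `(x, φ x)` and `(ψ y, y)` once `C` is large, it
yields a bijection `h` at bounded distance from `f`. Then `h` and `h⁻¹` are coarse Lipschitz,
being close to `f` and `g`, and on uniformly discrete spaces the additive constant of a coarse
Lipschitz map is absorbed into the multiplicative one.
-/

def BddDist {α β : Type*} [PseudoMetricSpace β] (u v : α → β) : Prop :=
  ∃ C : ℝ, ∀ a, dist (u a) (v a) ≤ C

namespace BddDist

variable {α β γ : Type*} [PseudoMetricSpace β] {u v w : α → β}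

theorem symm (h : BddDist u v) : BddDist v u := by
  obtain ⟨C, hC⟩ := h
  exact ⟨C, fun a => dist_comm (u a) (v a) ▸ hC a⟩

theorem trans (huv : BddDist u v) (hvw : BddDist v w) : BddDist u w := by
  obtain ⟨C, hC⟩ := huv
  obtain ⟨D, hD⟩ := hvw
  exact ⟨C + D, fun a => (dist_triangle _ (v a) _).trans (add_le_add (hC a) (hD a))⟩

theorem comp_right (h : BddDist u v) (k : γ → α) : BddDist (u ∘ k) (v ∘ k) := by
  obtain ⟨C, hC⟩ := h
  exact ⟨C, fun c => hC (k c)⟩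

end BddDist

namespace CoarseLipschitz

variable {X Y : Type*} [MetricSpace X] [MetricSpace Y] {f : X → Y}

theorem exists_nonneg (hf : CoarseLipschitz f) :
    ∃ K L : ℝ, 0 ≤ K ∧ 0 ≤ L ∧ ∀ x₁ x₂, dist (f x₁) (f x₂) ≤ K * dist x₁ x₂ + L := by
  obtain ⟨K, L, hKL⟩ := hf
  refine ⟨max K 0, max L 0, le_max_right _ _, le_max_right _ _, fun x₁ x₂ => ?_⟩
  calc dist (f x₁) (f x₂) ≤ K * dist x₁ x₂ + L := hKL x₁ x₂
    _ ≤ max K 0 * dist x₁ x₂ + max L 0 := by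
      gcongr
      · exact le_max_left _ _
      · exact le_max_left _ _

theorem bddDist_comp {α : Type*} (hf : CoarseLipschitz f) {u v : α → X} (h : BddDist u v) :
    BddDist (f ∘ u) (f ∘ v) := by
  obtain ⟨K, L, hK, -, hKL⟩ := hf.exists_nonneg
  obtain ⟨C, hC⟩ := h
  exact ⟨K * C + L, fun a => (hKL (u a) (v a)).trans (by gcongr; exact hC a)⟩

theorem of_bddDist (hf : CoarseLipschitz f) {h : X → Y} (hh : BddDist h f) :
    CoarseLipschitz h := by
  obtain ⟨K, L, hKL⟩ := hf
  obtain ⟨C, hC⟩ := hh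
  refine ⟨K, L + 2 * C, fun x₁ x₂ => ?_⟩
  have := dist_triangle4 (h x₁) (f x₁) (f x₂) (h x₂)
  have := hC x₂
  rw [dist_comm] at this
  linarith [hC x₁, hKL x₁ x₂]

end CoarseLipschitz

theorem UniformlyDiscrete.exists_lipschitz_of_coarseLipschitz {X Y : Type*} [MetricSpace X]
    [MetricSpace Y] (hX : UniformlyDiscrete X) {f : X → Y} (hf : CoarseLipschitz f) :
    ∃ K : ℝ, ∀ x₁ x₂, dist (f x₁) (f x₂) ≤ K * dist x₁ x₂ := by
  obtain ⟨r, hr, hX⟩ := hX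
  obtain ⟨K, L, -, hL, hKL⟩ := hf.exists_nonneg
  refine ⟨K + L / r, fun x₁ x₂ => ?_⟩
  rcases eq_or_ne x₁ x₂ with rfl | hne
  · simp
  have hrd : r ≤ dist x₁ x₂ := not_lt.mp fun h => hne (hX x₁ x₂ h)
  have hL' : L ≤ L / r * dist x₁ x₂ := by
    rw [div_mul_eq_mul_div, le_div_iff₀ hr]
    exact mul_le_mul_of_nonneg_left hrd hL
  linarith [hKL x₁ x₂]

theorem exists_bijective_bddDist {α β : Type*} [PseudoMetricSpace β] {f φ : α → β} {ψ : β → α}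
    (hφ : Function.Injective φ) (hψ : Function.Injective ψ) (hφf : BddDist φ f)
    (hfψ : BddDist (f ∘ ψ) id) : ∃ h : α → β, Function.Bijective h ∧ BddDist h f := by
  obtain ⟨C, hC⟩ := hφf
  obtain ⟨D, hD⟩ := hfψ
  obtain ⟨h, hbij, hh⟩ := Function.Embedding.schroeder_bernstein_of_rel hφ hψ
    (fun a b => dist b (f a) ≤ max C D) (fun a => (hC a).trans (le_max_left _ _))
    (fun b => (dist_comm b _ ▸ hD b).trans (le_max_right _ _))
  exact ⟨h, hbij, max C D, hh⟩

/-- Given a quasi-isometry `f` between uniformly discrete spaces, with coarse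
inverse `g`, and injections `φ`, `ψ` at bounded distance from `f`, `g`
respectively, there is a bijection `h` at bounded distance from `f`; moreover `h`
is a bilipschitz equivalence. -/
theorem stmt7 {X Y : Type*} [MetricSpace X] [MetricSpace Y]
    (hudX : UniformlyDiscrete X) (hudY : UniformlyDiscrete Y)
    (f : X → Y) (g : Y → X) (hf : CoarseLipschitz f) (hg : CoarseLipschitz g)
    (hgf : ∃ C : ℝ, ∀ x : X, dist (g (f x)) x ≤ C)
    (hfg : ∃ C : ℝ, ∀ y : Y, dist (f (g y)) y ≤ C)
    (φ : X → Y) (hφ : Function.Injective φ) (hφf : ∃ C : ℝ, ∀ x, dist (φ x) (f x) ≤ C)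
    (ψ : Y → X) (hψ : Function.Injective ψ) (hψg : ∃ C : ℝ, ∀ y, dist (ψ y) (g y) ≤ C) :
    ∃ h : X → Y, Function.Bijective h ∧ (∃ C : ℝ, ∀ x, dist (h x) (f x) ≤ C) ∧
      ∃ K : ℝ, 1 ≤ K ∧ ∀ x₁ x₂ : X,
        dist x₁ x₂ ≤ K * dist (h x₁) (h x₂) ∧ dist (h x₁) (h x₂) ≤ K * dist x₁ x₂ := by
  have hfψ : BddDist (f ∘ ψ) id := (hf.bddDist_comp hψg).trans hfg
  obtain ⟨h, hbij, hh⟩ := exists_bijective_bddDist hφ hψ hφf hfψ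
  let e := Equiv.ofBijective h hbij
  have hgh : BddDist (g ∘ h) id := (hg.bddDist_comp hh).trans hgf
  have he : BddDist e.symm g := by
    simpa only [Function.comp_def, id, e, Equiv.ofBijective_apply_symm_apply] using
      (hgh.comp_right e.symm).symm
  obtain ⟨K₁, hup⟩ := hudX.exists_lipschitz_of_coarseLipschitz (hf.of_bddDist hh)
  obtain ⟨K₂, hdown⟩ := hudY.exists_lipschitz_of_coarseLipschitz (hg.of_bddDist he)
  refine ⟨h, hbij, hh, max 1 (max K₁ K₂), le_max_left _ _, fun x₁ x₂ => ⟨?_, ?_⟩⟩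
  · have := hdown (h x₁) (h x₂)
    simp only [e, Equiv.ofBijective_symm_apply_apply] at this
    exact this.trans (by gcongr; exact le_max_of_le_right (le_max_right _ _))
  · exact (hup x₁ x₂).trans (by gcongr; exact le_max_of_le_right (le_max_left _ _))
end

section
/- If X and Y are uniformly discrete non-amenable spaces of bounded geometry and f : X → Y is a quasi-isometry, then there is a bijection (hence bilipschitz equivalence) between X and Y at bounded distance from f. -/
open scoped ENNReal

/-!
For a finite `S ⊆ X`, non-amenability makes the `r`-neighbourhood of `S` as large as any fixed
multiple of `|S|`, while `f` is at most `N`-to-one because `g ∘ f` is close to the identity. Hence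
`f` maps the neighbourhood onto at least `|S|` points near `f(S)`, which is Hall's condition for
an injection `X → Y` at bounded distance from `f`; symmetrically there is an injection `Y → X`
close to `g`. Schröder–Bernstein, run with the pointwise relation "at bounded distance from `f`",
merges the two into a bijection close to `f`. Both this bijection and its inverse are coarse
Lipschitz, and coarse Lipschitz maps on uniformly discrete spaces are Lipschitz.
-/

open Function

def Close {α Y : Type*} [MetricSpace Y] (f₁ f₂ : α → Y) : Prop :=
  ∃ C : ℝ, ∀ a, dist (f₁ a) (f₂ a) ≤ C

def NonAmenable (Z : Type*) [MetricSpace Z] : Prop :=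
  ∀ C > (0 : ℝ), ∃ r > (0 : ℝ), ∀ S : Set Z, S.Finite →
    (S.ncard : ℝ) ≤ C * ((bdry r S).ncard : ℝ)

section

variable {α X Y : Type*} [MetricSpace X] [MetricSpace Y]

theorem CoarseLipschitz.exists_nonneg_s9 {f : X → Y} (hf : CoarseLipschitz f) :
    ∃ K L : ℝ, 0 ≤ K ∧ 0 ≤ L ∧ ∀ x₁ x₂, dist (f x₁) (f x₂) ≤ K * dist x₁ x₂ + L := by
  obtain ⟨K, L, hKL⟩ := hf
  refine ⟨max K 0, max L 0, le_max_right _ _, le_max_right _ _, fun x₁ x₂ => (hKL x₁ x₂).trans ?_⟩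
  gcongr <;> exact le_max_left _ _

theorem CoarseLipschitz.of_close {f₁ f : X → Y} (hf : CoarseLipschitz f) (h : Close f₁ f) :
    CoarseLipschitz f₁ := by
  obtain ⟨K, L, hKL⟩ := hf
  obtain ⟨C, hC⟩ := h
  refine ⟨K, L + 2 * C, fun x₁ x₂ => ?_⟩
  calc dist (f₁ x₁) (f₁ x₂) ≤ dist (f₁ x₁) (f x₁) + dist (f x₁) (f x₂) + dist (f x₂) (f₁ x₂) :=
        dist_triangle4 _ _ _ _
    _ ≤ C + (K * dist x₁ x₂ + L) + C := by
        gcongr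
        exacts [hC x₁, hKL x₁ x₂, (dist_comm _ _).trans_le (hC x₂)]
    _ = K * dist x₁ x₂ + (L + 2 * C) := by ring

theorem CoarseLipschitz.exists_lipschitzWith (hX : UniformlyDiscrete X) {f : X → Y}
    (hf : CoarseLipschitz f) : ∃ K, LipschitzWith K f := by
  obtain ⟨δ, hδ, hδX⟩ := hX
  obtain ⟨K, L, hK, hL, hKL⟩ := hf.exists_nonneg_s9
  refine ⟨⟨K + L / δ, by positivity⟩, LipschitzWith.of_dist_le_mul fun x₁ x₂ => ?_⟩
  rcases eq_or_ne x₁ x₂ with rfl | hne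
  · simp
  have hδd : δ ≤ dist x₁ x₂ := not_lt.mp fun h => hne (hδX _ _ h)
  calc dist (f x₁) (f x₂) ≤ K * dist x₁ x₂ + L / δ * δ := by
        rw [div_mul_cancel₀ L hδ.ne']; exact hKL x₁ x₂
    _ ≤ K * dist x₁ x₂ + L / δ * dist x₁ x₂ := by gcongr
    _ = (K + L / δ) * dist x₁ x₂ := by ring

namespace Close

variable {f₁ f₂ f₃ : α → Y}

theorem symm (h : Close f₁ f₂) : Close f₂ f₁ := by
  obtain ⟨C, hC⟩ := h
  exact ⟨C, fun a => dist_comm (f₁ a) (f₂ a) ▸ hC a⟩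

theorem trans (h₁₂ : Close f₁ f₂) (h₂₃ : Close f₂ f₃) : Close f₁ f₃ := by
  obtain ⟨C, hC⟩ := h₁₂
  obtain ⟨C', hC'⟩ := h₂₃
  exact ⟨C + C', fun a => (dist_triangle _ (f₂ a) _).trans (add_le_add (hC a) (hC' a))⟩

theorem comp_left {Z : Type*} [MetricSpace Z] {g : Y → Z} (hg : CoarseLipschitz g)
    (h : Close f₁ f₂) : Close (g ∘ f₁) (g ∘ f₂) := by
  obtain ⟨K, L, hK, -, hKL⟩ := hg.exists_nonneg_s9
  obtain ⟨C, hC⟩ := h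
  exact ⟨K * C + L, fun a => (hKL _ _).trans (by gcongr; exact hC a)⟩

end Close

theorem BoundedGeometry.finite_nbhd (hX : BoundedGeometry X) (r : ℝ) {A : Set X}
    (hA : A.Finite) : (nbhd r A).Finite := by
  obtain ⟨N, hN⟩ := hX r
  have : nbhd r A = ⋃ a ∈ A, {x | dist x a ≤ r} := by ext x; simp [nbhd]
  rw [this]
  exact hA.biUnion fun a _ => (hN a).1

theorem BoundedGeometry.exists_ncard_le_mul_ncard_image (hX : BoundedGeometry X) {f : X → α}
    {D : ℝ} (hf : ∀ x₁ x₂, f x₁ = f x₂ → dist x₁ x₂ ≤ D) :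
    ∃ N : ℕ, ∀ A : Set X, A.Finite → A.ncard ≤ N * (f '' A).ncard := by
  classical
  obtain ⟨N, hN⟩ := hX D
  refine ⟨N, fun A hA => ?_⟩
  lift A to Finset X using hA
  rw [← Finset.coe_image, Set.ncard_coe_finset, Set.ncard_coe_finset]
  refine Finset.card_le_mul_card_image A N fun y hy => ?_
  obtain ⟨x₀, -, rfl⟩ := Finset.mem_image.mp hy
  rw [← Set.ncard_coe_finset]
  refine (Set.ncard_le_ncard (fun x hx => ?_) (hN x₀).1).trans (hN x₀).2
  exact hf _ _ (Finset.mem_filter.mp hx).2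

theorem NonAmenable.exists_mul_ncard_le (hX : NonAmenable X) {N : ℕ} (hN : 0 < N) :
    ∃ r, ∀ S : Set X, S.Finite → N * S.ncard ≤ (bdry r S).ncard := by
  obtain ⟨r, -, hr⟩ := hX (1 / N) (by positivity)
  refine ⟨r, fun S hS => ?_⟩
  have := hr S hS
  rw [div_mul_eq_mul_div, one_mul, le_div_iff₀ (by positivity)] at this
  exact_mod_cast (mul_comm (S.ncard : ℝ) N ▸ this)

theorem NonAmenable.exists_ncard_le_ncard_image_nbhd (hbg : BoundedGeometry X)
    (hX : NonAmenable X) {f : X → α} {D : ℝ} (hf : ∀ x₁ x₂, f x₁ = f x₂ → dist x₁ x₂ ≤ D) :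
    ∃ r, ∀ S : Set X, S.Finite → S.ncard ≤ (f '' nbhd r S).ncard := by
  obtain ⟨N, hN⟩ := hbg.exists_ncard_le_mul_ncard_image hf
  obtain ⟨r, hr⟩ := hX.exists_mul_ncard_le N.succ_pos
  refine ⟨r, fun S hS => Nat.le_of_mul_le_mul_left ?_ N.succ_pos⟩
  have hA := hbg.finite_nbhd r hS
  calc (N + 1) * S.ncard ≤ (bdry r S).ncard := hr S hS
    _ ≤ (nbhd r S).ncard := Set.ncard_le_ncard Set.sdiff_subset hA
    _ ≤ N * (f '' nbhd r S).ncard := hN _ hA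
    _ ≤ (N + 1) * (f '' nbhd r S).ncard := by gcongr; omega

theorem image_nbhd_subset_nbhd_image {f : X → Y} {K L : ℝ} (hK : 0 ≤ K)
    (hf : ∀ x₁ x₂, dist (f x₁) (f x₂) ≤ K * dist x₁ x₂ + L) (r : ℝ) (S : Set X) :
    f '' nbhd r S ⊆ nbhd (K * r + L) (f '' S) := by
  rintro _ ⟨x, ⟨a, ha, hxa⟩, rfl⟩
  exact ⟨f a, Set.mem_image_of_mem f ha, (hf x a).trans (by gcongr)⟩

theorem exists_injective_dist_le_of_card_le_ncard_nbhd (hY : BoundedGeometry Y) (f : α → Y)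
    (R : ℝ) (hall : ∀ s : Finset α, s.card ≤ (nbhd R (f '' s)).ncard) :
    ∃ φ : α → Y, Injective φ ∧ ∀ a, dist (φ a) (f a) ≤ R := by
  classical
  obtain ⟨N, hN⟩ := hY R
  let t : α → Finset Y := fun a => (hN (f a)).1.toFinset
  have ht : ∀ a y, y ∈ t a ↔ dist y (f a) ≤ R := by simp [t]
  obtain ⟨φ, hφ, hφt⟩ := (Finset.all_card_le_biUnion_card_iff_exists_injective t).mp fun s => by
    have : nbhd R (f '' s) = ↑(s.biUnion t) := by ext y; simp [nbhd, ht]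
    have hs := hall s
    rwa [this, Set.ncard_coe_finset] at hs
  exact ⟨φ, hφ, fun a => (ht a _).mp (hφt a)⟩

theorem exists_injective_close (hbgX : BoundedGeometry X) (hbgY : BoundedGeometry Y)
    (hX : NonAmenable X) {f : X → Y} {g : Y → X} (hf : CoarseLipschitz f)
    (hgf : Close (g ∘ f) id) : ∃ φ : X → Y, Injective φ ∧ Close φ f := by
  obtain ⟨C, hC : ∀ x, dist (g (f x)) x ≤ C⟩ := hgf
  have hfib : ∀ x₁ x₂, f x₁ = f x₂ → dist x₁ x₂ ≤ 2 * C := fun x₁ x₂ h => calc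
    dist x₁ x₂ ≤ dist (g (f x₁)) x₁ + dist (g (f x₂)) x₂ := by
        rw [h]; exact dist_triangle_left _ _ _
    _ ≤ 2 * C := by linarith [hC x₁, hC x₂]
  obtain ⟨r, hr⟩ := hX.exists_ncard_le_ncard_image_nbhd hbgX hfib
  obtain ⟨K, L, hK, -, hKL⟩ := hf.exists_nonneg_s9
  obtain ⟨φ, hφ, hφf⟩ := exists_injective_dist_le_of_card_le_ncard_nbhd hbgY f (K * r + L)
    fun s => calc
      s.card = (s : Set X).ncard := (Set.ncard_coe_finset s).symm
      _ ≤ (f '' nbhd r s).ncard := hr _ s.finite_toSet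
      _ ≤ _ := Set.ncard_le_ncard (image_nbhd_subset_nbhd_image hK hKL r _)
        (hbgY.finite_nbhd _ (s.finite_toSet.image f))
  exact ⟨φ, hφ, _, hφf⟩

theorem exists_bijective_close {f : X → Y} {g : Y → X} {φ : X → Y} {ψ : Y → X}
    (hφ : Injective φ) (hψ : Injective ψ) (hf : CoarseLipschitz f) (hφf : Close φ f)
    (hψg : Close ψ g) (hfg : Close (f ∘ g) id) : ∃ h : X → Y, Bijective h ∧ Close h f := by
  obtain ⟨C₁, hC₁⟩ := hφf
  obtain ⟨C₂, hC₂⟩ := hfg.symm.trans (hψg.symm.comp_left hf)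
  obtain ⟨h, hh, hhf⟩ := Embedding.schroeder_bernstein_of_rel hφ hψ
    (fun x y => dist y (f x) ≤ max C₁ C₂) (fun x => (hC₁ x).trans (le_max_left _ _))
    (fun y => (hC₂ y).trans (le_max_right _ _))
  exact ⟨h, hh, _, hhf⟩

theorem exists_bilipschitz_of_close (hX : UniformlyDiscrete X) (hY : UniformlyDiscrete Y)
    {f h : X → Y} {g : Y → X} (hf : CoarseLipschitz f) (hg : CoarseLipschitz g)
    (hgf : Close (g ∘ f) id) (hh : Bijective h) (hhf : Close h f) :
    ∃ K : ℝ, 1 ≤ K ∧ ∀ x₁ x₂ : X,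
      dist x₁ x₂ ≤ K * dist (h x₁) (h x₂) ∧ dist (h x₁) (h x₂) ≤ K * dist x₁ x₂ := by
  set e := Equiv.ofBijective h hh
  have he : Close e.symm g := by
    obtain ⟨C, hC⟩ := hgf.symm.trans (hhf.comp_left hg).symm
    refine ⟨C, fun y => ?_⟩
    have hy : h (e.symm y) = y := e.apply_symm_apply y
    simpa [hy] using hC (e.symm y)
  obtain ⟨K₁, hK₁⟩ := (hf.of_close hhf).exists_lipschitzWith hX
  obtain ⟨K₂, hK₂⟩ := (hg.of_close he).exists_lipschitzWith hY
  refine ⟨max 1 (max K₁ K₂), le_max_left _ _, fun x₁ x₂ => ⟨?_, ?_⟩⟩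
  · calc dist x₁ x₂ = dist (e.symm (h x₁)) (e.symm (h x₂)) := by simp [e]
      _ ≤ K₂ * dist (h x₁) (h x₂) := hK₂.dist_le_mul _ _
      _ ≤ _ := by gcongr; exact le_max_of_le_right (le_max_right _ _)
  · calc dist (h x₁) (h x₂) ≤ K₁ * dist x₁ x₂ := hK₁.dist_le_mul _ _
      _ ≤ _ := by gcongr; exact le_max_of_le_right (le_max_left _ _)

end

/-- If `X` and `Y` are uniformly discrete, non-amenable, bounded-geometry spaces
and `f` is a quasi-isometry, then there is a bijection at bounded distance from
`f` (hence a bilipschitz equivalence).  Non-amenability is taken in the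
isoperimetric form: for every `C > 0` there is `r` with `|S| ≤ C·|∂_r S|`. -/
theorem stmt9 {X Y : Type*} [MetricSpace X] [MetricSpace Y]
    (hudX : UniformlyDiscrete X) (hbgX : BoundedGeometry X)
    (hudY : UniformlyDiscrete Y) (hbgY : BoundedGeometry Y)
    (hnaX : ∀ C > (0 : ℝ), ∃ r > (0 : ℝ), ∀ S : Set X, S.Finite →
      (S.ncard : ℝ) ≤ C * ((bdry r S).ncard : ℝ))
    (hnaY : ∀ C > (0 : ℝ), ∃ r > (0 : ℝ), ∀ S : Set Y, S.Finite →
      (S.ncard : ℝ) ≤ C * ((bdry r S).ncard : ℝ))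
    (f : X → Y) (g : Y → X) (hf : CoarseLipschitz f) (hg : CoarseLipschitz g)
    (hgf : ∃ C : ℝ, ∀ x : X, dist (g (f x)) x ≤ C)
    (hfg : ∃ C : ℝ, ∀ y : Y, dist (f (g y)) y ≤ C) :
    ∃ h : X → Y, Function.Bijective h ∧ (∃ C : ℝ, ∀ x, dist (h x) (f x) ≤ C) ∧
      ∃ K : ℝ, 1 ≤ K ∧ ∀ x₁ x₂ : X,
        dist x₁ x₂ ≤ K * dist (h x₁) (h x₂) ∧ dist (h x₁) (h x₂) ≤ K * dist x₁ x₂ := by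
  obtain ⟨φ, hφ, hφf⟩ := exists_injective_close hbgX hbgY hnaX hf hgf
  obtain ⟨ψ, hψ, hψg⟩ := exists_injective_close hbgY hbgX hnaY hg hfg
  obtain ⟨h, hh, hhf⟩ := exists_bijective_close hφ hψ hf hφf hψg hfg
  exact ⟨h, hh, hhf, exists_bilipschitz_of_close hudX hudY hf hg hgf hh hhf⟩
end

section
/- Let Z be a uniformly discrete space of bounded geometry and c : Z → ℤ a uniformly bounded function (0-chain). If c = ∂b for a uniformly finite 1-chain b with coefficients bounded by M and edges of length at most l, then there exist constants C, r such that for every finite subset S ⊆ Z, |Σ_{z∈S} c(z)| ≤ C·|∂_r(S)|. -/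
/-- A uniformly finite 1-chain with coefficients in a normed ring `R`:
coefficients on ordered pairs (edges), uniformly bounded, supported on edges of
uniformly bounded length, and locally finite at each vertex. -/
def IsUFOneChain {Z : Type*} [MetricSpace Z] {R : Type*} [NormedRing R]
    (b : Z → Z → R) : Prop :=
  (∃ M : ℝ, ∀ z w : Z, ‖b z w‖ ≤ M) ∧
  (∃ l : ℝ, ∀ z w : Z, b z w ≠ 0 → dist z w ≤ l) ∧
  (∀ z : Z, {w : Z | b z w ≠ 0 ∨ b w z ≠ 0}.Finite)

/-- The boundary of a 1-chain at a vertex `z`: net flow into `z`. -/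
noncomputable def ufBoundaryAt {Z : Type*} [MetricSpace Z] {R : Type*} [NormedRing R]
    (b : Z → Z → R) (z : Z) : R :=
  (∑ᶠ w : Z, b w z) - ∑ᶠ w : Z, b z w

/-- A 0-chain `c` represents `0` in `H₀^{uf}(Z; R)` iff it is the boundary of a
uniformly finite 1-chain. -/
def UFBoundsZero {Z : Type*} [MetricSpace Z] {R : Type*} [NormedRing R]
    (c : Z → R) : Prop :=
  ∃ b : Z → Z → R, IsUFOneChain b ∧ ∀ z : Z, c z = ufBoundaryAt b z

/-- If a uniformly bounded 0-chain `c` is the boundary `∂b` of a uniformly finite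
1-chain `b` with coefficients bounded by `M` and edges of length at most `l`, then
there are `C`, `r` with `|Σ_S c| ≤ C·|∂_r S|` for every finite `S`. -/
theorem stmt10 {Z : Type*} [MetricSpace Z]
    (hud : UniformlyDiscrete Z) (hbg : BoundedGeometry Z)
    (c : Z → ℤ) (hc : ∃ K : ℤ, ∀ z, |c z| ≤ K)
    (b : Z → Z → ℤ) (M l : ℝ)
    (hM : ∀ z w, ‖b z w‖ ≤ M) (hl : ∀ z w, b z w ≠ 0 → dist z w ≤ l)
    (hfin : ∀ z : Z, {w : Z | b z w ≠ 0 ∨ b w z ≠ 0}.Finite)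
    (hboundary : ∀ z, c z = ufBoundaryAt b z) :
    ∃ C r : ℝ, 0 < r ∧ ∀ S : Finset Z,
      (|∑ z ∈ S, c z| : ℝ) ≤ C * ((bdry r (S : Set Z)).ncard : ℝ) := by
  classical
  obtain ⟨N, hN⟩ := hbg l
  set M' : ℝ := max M 0 with hM'def
  have hM'0 : 0 ≤ M' := le_max_right _ _
  have hMM' : ∀ z w, ‖b z w‖ ≤ M' := fun z w => (hM z w).trans (le_max_left _ _)
  set r : ℝ := max l 1 with hrdef
  refine ⟨2 * M' * N, r, lt_of_lt_of_le one_pos (le_max_right _ _), fun S => ?_⟩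
  set f : Z → Z → ℤ := fun w z => b w z - b z w with hf
  have hfne : ∀ w z, f w z ≠ 0 → b w z ≠ 0 ∨ b z w ≠ 0 := by
    intro w z h
    by_contra hcon
    push_neg at hcon
    exact h (by simp [hf, hcon.1, hcon.2])
  have hdist : ∀ w z, f w z ≠ 0 → dist z w ≤ l := by
    intro w z h
    rcases hfne w z h with h1 | h1
    · exact dist_comm z w ▸ hl w z h1
    · exact hl z w h1
  set T : Finset Z := S ∪ S.biUnion (fun z => (hfin z).toFinset) with hTdef
  have hFT : ∀ z ∈ S, ∀ w, (b z w ≠ 0 ∨ b w z ≠ 0) → w ∈ T := by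
    intro z hz w hw
    exact Finset.mem_union_right _
      (Finset.mem_biUnion.2 ⟨z, hz, (hfin z).mem_toFinset.2 hw⟩)
  have hsum1 : ∑ z ∈ S, c z = ∑ z ∈ S, ∑ w ∈ T, f w z := by
    refine Finset.sum_congr rfl fun z hz => ?_
    rw [hboundary z, ufBoundaryAt]
    have h1 : ∑ᶠ w, b w z = ∑ w ∈ T, b w z :=
      finsum_eq_finset_sum_of_support_subset _
        (fun w hw => Finset.mem_coe.2 (hFT z hz w (Or.inr hw)))
    have h2 : ∑ᶠ w, b z w = ∑ w ∈ T, b z w :=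
      finsum_eq_finset_sum_of_support_subset _
        (fun w hw => Finset.mem_coe.2 (hFT z hz w (Or.inl hw)))
    rw [h1, h2, ← Finset.sum_sub_distrib]
  have hsplit : ∀ z ∈ S, ∑ w ∈ T, f w z = ∑ w ∈ S, f w z + ∑ w ∈ T \ S, f w z := by
    intro z hz
    have h1 : ∑ w ∈ T ∩ S, f w z + ∑ w ∈ T \ S, f w z = ∑ w ∈ T, f w z :=
      Finset.sum_inter_add_sum_sdiff T S _
    have h2 : ∑ w ∈ T ∩ S, f w z = ∑ w ∈ S, f w z := by
      apply Finset.sum_subset Finset.inter_subset_right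
      intro w hwS hw
      have hwT : w ∉ T := fun h => hw (Finset.mem_inter.2 ⟨h, hwS⟩)
      have hb1 : b z w = 0 := by
        by_contra h; exact hwT (hFT z hz w (Or.inl h))
      have hb2 : b w z = 0 := by
        by_contra h; exact hwT (hFT z hz w (Or.inr h))
      simp [hf, hb1, hb2]
    rw [← h1, h2]
  have hanti : ∑ z ∈ S, ∑ w ∈ S, f w z = 0 := by
    have h1 : ∑ z ∈ S, ∑ w ∈ S, f z w = ∑ z ∈ S, ∑ w ∈ S, f w z :=
      Finset.sum_comm
    have h2 : ∀ z w : Z, f z w = -f w z := by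
      intro z w; simp [hf]
    have h3 : ∑ z ∈ S, ∑ w ∈ S, f z w = -∑ z ∈ S, ∑ w ∈ S, f w z := by
      rw [← Finset.sum_neg_distrib]
      refine Finset.sum_congr rfl fun z _ => ?_
      rw [← Finset.sum_neg_distrib]
      exact Finset.sum_congr rfl fun w _ => h2 z w
    linarith [h1, h3]
  have hsum2 : ∑ z ∈ S, c z = ∑ w ∈ T \ S, ∑ z ∈ S, f w z := by
    rw [hsum1, Finset.sum_congr rfl hsplit, Finset.sum_add_distrib, hanti, zero_add,
      Finset.sum_comm]
  have hbdry : ∀ w, w ∉ S → ∀ z ∈ S, f w z ≠ 0 → w ∈ bdry r (S : Set Z) := by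
    intro w hwS z hz hfwz
    refine ⟨⟨z, Finset.mem_coe.2 hz, ?_⟩, fun h => hwS (Finset.mem_coe.1 h)⟩
    calc dist w z = dist z w := dist_comm w z
    _ ≤ l := hdist w z hfwz
    _ ≤ r := le_max_left l 1
  set B : Finset Z := (T \ S).filter (fun w => w ∈ bdry r (S : Set Z)) with hB
  have hsum3 : ∑ z ∈ S, c z = ∑ w ∈ B, ∑ z ∈ S, f w z := by
    rw [hsum2]
    symm
    apply Finset.sum_filter_of_ne
    intro w hw hne
    obtain ⟨z, hz, hfz⟩ : ∃ z ∈ S, f w z ≠ 0 := by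
      by_contra h; push_neg at h; exact hne (Finset.sum_eq_zero h)
    exact hbdry w (Finset.mem_sdiff.1 hw).2 z hz hfz
  -- each coefficient is bounded
  have hterm : ∀ w z, ((|f w z| : ℤ) : ℝ) ≤ 2 * M' := by
    intro w z
    have h1 : ‖f w z‖ ≤ ‖b w z‖ + ‖b z w‖ := norm_sub_le _ _
    have h2 : ((|f w z| : ℤ) : ℝ) = ‖f w z‖ := by
      rw [Int.norm_eq_abs]; push_cast; ring
    rw [h2]
    calc ‖f w z‖ ≤ ‖b w z‖ + ‖b z w‖ := h1
    _ ≤ M' + M' := add_le_add (hMM' w z) (hMM' z w)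
    _ = 2 * M' := by ring
  -- inner sum bound
  have hinner : ∀ w, (∑ z ∈ S, ((|f w z| : ℤ) : ℝ)) ≤ 2 * M' * N := by
    intro w
    set Sw : Finset Z := S.filter (fun z => f w z ≠ 0) with hSw
    have heq : ∑ z ∈ Sw, ((|f w z| : ℤ) : ℝ) = ∑ z ∈ S, ((|f w z| : ℤ) : ℝ) := by
      apply Finset.sum_filter_of_ne
      intro z hz hne
      intro h0
      exact hne (by simp [h0])
    have hcard : (Sw.card : ℝ) ≤ N := by
      have hsub : (Sw : Set Z) ⊆ {y : Z | dist y w ≤ l} := by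
        intro z hz
        exact hdist w z (Finset.mem_filter.1 (Finset.mem_coe.1 hz)).2
      have h1 := Set.ncard_le_ncard hsub (hN w).1
      rw [Set.ncard_coe_finset] at h1
      exact_mod_cast h1.trans (hN w).2
    calc ∑ z ∈ S, ((|f w z| : ℤ) : ℝ) = ∑ z ∈ Sw, ((|f w z| : ℤ) : ℝ) := heq.symm
    _ ≤ ∑ _z ∈ Sw, (2 * M') := Finset.sum_le_sum (fun z _ => hterm w z)
    _ = Sw.card * (2 * M') := by rw [Finset.sum_const, nsmul_eq_mul]
    _ ≤ N * (2 * M') := by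
        apply mul_le_mul_of_nonneg_right hcard (by positivity)
    _ = 2 * M' * N := by ring
  -- boundary is finite
  have hbfin : (bdry r (S : Set Z)).Finite := by
    obtain ⟨Nr, hNr⟩ := hbg r
    have hsub : bdry r (S : Set Z) ⊆ ⋃ a ∈ (S : Set Z), {y : Z | dist y a ≤ r} := by
      rintro w ⟨⟨a, ha, hda⟩, -⟩
      exact Set.mem_biUnion ha hda
    exact Set.Finite.subset (Set.Finite.biUnion S.finite_toSet (fun a _ => (hNr a).1)) hsub
  have hBcard : (B.card : ℝ) ≤ ((bdry r (S : Set Z)).ncard : ℝ) := by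
    have hsub : (B : Set Z) ⊆ bdry r (S : Set Z) := by
      intro w hw
      exact (Finset.mem_filter.1 (Finset.mem_coe.1 hw)).2
    have h1 := Set.ncard_le_ncard hsub hbfin
    rw [Set.ncard_coe_finset] at h1
    exact_mod_cast h1
  -- put it together
  have habs : (|∑ z ∈ S, c z| : ℤ) ≤ ∑ w ∈ B, ∑ z ∈ S, |f w z| := by
    rw [hsum3]
    calc |∑ w ∈ B, ∑ z ∈ S, f w z| ≤ ∑ w ∈ B, |∑ z ∈ S, f w z| :=
      Finset.abs_sum_le_sum_abs _ _
    _ ≤ ∑ w ∈ B, ∑ z ∈ S, |f w z| :=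
      Finset.sum_le_sum (fun w _ => Finset.abs_sum_le_sum_abs _ _)
  have habsR : ((|∑ z ∈ S, c z| : ℤ) : ℝ) ≤ ∑ w ∈ B, ∑ z ∈ S, ((|f w z| : ℤ) : ℝ) := by
    exact_mod_cast habs
  calc |∑ z ∈ S, ((c z : ℤ) : ℝ)| = ((|∑ z ∈ S, c z| : ℤ) : ℝ) := by push_cast; ring
  _ ≤ ∑ w ∈ B, ∑ z ∈ S, ((|f w z| : ℤ) : ℝ) := habsR
  _ ≤ ∑ _w ∈ B, (2 * M' * N) := Finset.sum_le_sum (fun w _ => hinner w)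
  _ = B.card * (2 * M' * N) := by rw [Finset.sum_const, nsmul_eq_mul]
  _ ≤ ((bdry r (S : Set Z)).ncard : ℝ) * (2 * M' * N) := by
      apply mul_le_mul_of_nonneg_right hBcard (by positivity)
  _ = 2 * M' * N * ((bdry r (S : Set Z)).ncard : ℝ) := by ring
end

section
/- Let Z be a uniformly discrete space of bounded geometry. If a uniformly bounded integer-valued 0-cycle c bounds a uniformly finite 1-chain with real coefficients, then c bounds a uniformly finite 1-chain with integer coefficients; i.e., the map H₀^{uf}(Z; ℤ) → H₀^{uf}(Z; ℝ) is injective. -/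
/-!
A locally finite real chain `b` with integral boundary is rounded to an integral chain with the
same boundary and coefficients bounded by `⌈|b|⌉`; bounds, supports and edge lengths then pass
from `b` to the rounded chain.

On finitely many vertices this is the integrality of flows: among the real flows between `⌊x⌋`
and `⌈x⌉` with prescribed integral net flow on a finite set `S`, take an extreme point
(Krein–Milman). A vertex of `S` with integral net flow cannot meet exactly one edge carrying a
fractional value, so a dimension count gives a nonzero circulation on the fractional edges, and
moving along it in both directions contradicts extremality. In general, the integral chains
dominated by `⌈|b|⌉` form a compact space (Tychonoff) in which the conditions "the boundary at
`z` is `c z`" are closed and, by the finite case, have the finite intersection property.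
-/

open Finset Filter Topology AddSubgroup

section Flows

variable {Z : Type*}

def netFlow (T : Finset Z) (z : Z) : (Z × Z → ℝ) →ₗ[ℝ] ℝ :=
  ∑ w ∈ T, (LinearMap.proj (R := ℝ) (φ := fun _ => ℝ) (w, z) - LinearMap.proj (z, w))

@[simp]
lemma netFlow_apply (T : Finset Z) (z : Z) (x : Z × Z → ℝ) :
    netFlow T z x = ∑ w ∈ T, (x (w, z) - x (z, w)) := by
  simp [netFlow]

lemma continuous_netFlow (T : Finset Z) (z : Z) : Continuous (netFlow T z) := by
  simp only [funext (netFlow_apply T z)]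
  fun_prop

lemma sum_netFlow_self (T : Finset Z) (x : Z × Z → ℝ) : ∑ v ∈ T, netFlow T v x = 0 := by
  simp only [netFlow_apply, sum_sub_distrib]
  rw [sum_comm, sub_self]

lemma netFlow_eq_zero_of_forall {T : Finset Z} {z : Z} {x : Z × Z → ℝ}
    (hx : ∀ w, x (w, z) = 0 ∧ x (z, w) = 0) : netFlow T z x = 0 := by
  simp [hx]

lemma sum_netFlow_eq_zero {T V : Finset Z} (hVT : V ⊆ T) {x : Z × Z → ℝ}
    (hx : ∀ p, x p ≠ 0 → p.1 ∈ V ∧ p.2 ∈ V) : ∑ v ∈ V, netFlow T v x = 0 := by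
  rw [sum_subset hVT fun v _ hv => netFlow_eq_zero_of_forall fun w => ⟨?_, ?_⟩, sum_netFlow_self]
  · by_contra h; exact hv (hx _ h).2
  · by_contra h; exact hv (hx _ h).1

noncomputable def incidenceMap (T V : Finset Z) (F : Finset (Z × Z)) : (F → ℝ) →ₗ[ℝ] (V → ℝ) :=
  LinearMap.pi fun v => netFlow T v ∘ₗ Function.ExtendByZero.linearMap ℝ ((↑) : F → Z × Z)

lemma extend_val_eq_zero_of_notMem {F : Finset (Z × Z)} (d : F → ℝ) {p : Z × Z} (hp : p ∉ F) :
    Function.extend ((↑) : F → Z × Z) d 0 p = 0 :=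
  Function.extend_apply' _ _ _ fun ⟨q, hq⟩ => hp (hq ▸ q.2)

lemma range_incidenceMap_ne_top {T V : Finset Z} {F : Finset (Z × Z)} (hV : V.Nonempty)
    (hVT : V ⊆ T) (hFV : ∀ p ∈ F, p.1 ∈ V ∧ p.2 ∈ V) :
    LinearMap.range (incidenceMap T V F) ≠ ⊤ := fun htop => by
  obtain ⟨d, hd⟩ := LinearMap.range_eq_top.mp htop fun _ => 1
  have hsum := sum_netFlow_eq_zero hVT (x := Function.extend ((↑) : F → Z × Z) d 0) fun p hp =>
    hFV p (by_contra fun h => hp (extend_val_eq_zero_of_notMem d h))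
  rw [← sum_coe_sort] at hsum
  have hΦ : ∀ v : V, incidenceMap T V F d v = netFlow T v (Function.extend (↑) d 0) :=
    fun _ => rfl
  simp only [← hΦ, hd, sum_const, card_univ, Fintype.card_coe, nsmul_eq_mul, mul_one,
    Nat.cast_eq_zero, card_eq_zero] at hsum
  exact hV.ne_empty hsum

lemma eventually_add_smul_mem_Icc {ι : Type*} {F : Finset ι} {a b : ι → ℤ} {y d : ι → ℝ}
    (hy : ∀ i, y i ∈ Set.Icc (a i : ℝ) (b i)) (hF : ∀ i ∈ F, y i ∉ zmultiples (1 : ℝ))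
    (hd : ∀ i ∉ F, d i = 0) :
    ∀ᶠ ε in 𝓝 (0 : ℝ), ∀ i, (y + ε • d) i ∈ Set.Icc (a i : ℝ) (b i) := by
  have hF' : ∀ᶠ ε in 𝓝 (0 : ℝ), ∀ i ∈ F, y i + ε * d i ∈ Set.Ioo (a i : ℝ) (b i) := by
    refine (eventually_all_finset F).mpr fun i hi => ?_
    have hyi : y i ∈ Set.Ioo (a i : ℝ) (b i) :=
      ⟨(hy i).1.lt_of_ne fun h => hF i hi (h ▸ intCast_mem_zmultiples_one _),
        (hy i).2.lt_of_ne fun h => hF i hi (h ▸ intCast_mem_zmultiples_one _)⟩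
    exact (Continuous.tendsto (by fun_prop) 0).eventually_mem
      (by simpa using isOpen_Ioo.mem_nhds hyi)
  filter_upwards [hF'] with ε hε i
  by_cases hi : i ∈ F
  · exact Set.Ioo_subset_Icc_self (hε i hi)
  · simpa [hd i hi] using hy i

def roundingPolytope (T S : Finset Z) (x : Z × Z → ℝ) (c : Z → ℤ) : Set (Z × Z → ℝ) :=
  {y | (∀ p, y p ∈ Set.Icc (⌊x p⌋ : ℝ) ⌈x p⌉) ∧ ∀ z ∈ S, netFlow T z y = c z}

lemma isCompact_roundingPolytope (T S : Finset Z) (x : Z × Z → ℝ) (c : Z → ℤ) :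
    IsCompact (roundingPolytope T S x c) := by
  rw [show roundingPolytope T S x c = (Set.univ.pi fun p => Set.Icc (⌊x p⌋ : ℝ) ⌈x p⌉) ∩
    {y | ∀ z ∈ S, netFlow T z y = c z} by
      ext; simp only [roundingPolytope, Set.mem_inter_iff, Set.mem_univ_pi, Set.mem_ofPred_eq]]
  refine (isCompact_univ_pi fun p => isCompact_Icc).inter_right ?_
  simp only [Set.ofPred_forall]
  exact isClosed_biInter fun z _ => isClosed_eq (continuous_netFlow T z) continuous_const

lemma exists_sub_add_smul_mem_roundingPolytope {T S : Finset Z} {x : Z × Z → ℝ} {c : Z → ℤ}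
    {y d : Z × Z → ℝ} (hy : y ∈ roundingPolytope T S x c) {F : Finset (Z × Z)}
    (hF : ∀ q ∈ F, y q ∉ zmultiples (1 : ℝ)) (hdF : ∀ q ∉ F, d q = 0)
    (hdS : ∀ z ∈ S, netFlow T z d = 0) :
    ∃ ε ≠ (0 : ℝ), y - ε • d ∈ roundingPolytope T S x c ∧ y + ε • d ∈ roundingPolytope T S x c := by
  have hmem : ∀ δ : ℝ, (∀ q, (y + δ • d) q ∈ Set.Icc (⌊x q⌋ : ℝ) ⌈x q⌉) →
      y + δ • d ∈ roundingPolytope T S x c := fun δ hδ =>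
    ⟨hδ, fun z hz => by simp only [map_add, map_smul, hy.2 z hz, hdS z hz, smul_zero, add_zero]⟩
  have hplus := eventually_add_smul_mem_Icc hy.1 hF hdF
  have hminus := eventually_add_smul_mem_Icc hy.1 hF (d := -d) fun q hq => by simp [hdF q hq]
  obtain ⟨ε, ⟨hεplus, hεminus⟩, hε0⟩ :=
    ((hplus.and hminus).filter_mono nhdsWithin_le_nhds |>.and self_mem_nhdsWithin).exists
      (f := 𝓝[≠] (0 : ℝ))
  exact ⟨ε, hε0, by simpa [sub_eq_add_neg] using hmem (-ε) (by simpa using hεminus),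
    hmem ε hεplus⟩

variable [DecidableEq Z]

lemma two_mul_card_le_sum_card_endpoints {F : Finset (Z × Z)} {V : Finset Z}
    (hdeg : ∀ v ∈ V, ∃ p ∈ F, ∃ q ∈ F, p ≠ q ∧ (p.1 = v ∨ p.2 = v) ∧ (q.1 = v ∨ q.2 = v)) :
    2 * #V ≤ ∑ p ∈ F, #{v ∈ V | p.1 = v ∨ p.2 = v} := by
  calc 2 * #V = ∑ _v ∈ V, 2 := by rw [sum_const, smul_eq_mul, mul_comm]
    _ ≤ ∑ v ∈ V, #{p ∈ F | p.1 = v ∨ p.2 = v} := sum_le_sum fun v hv => by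
        obtain ⟨p, hp, q, hq, hpq, hpv, hqv⟩ := hdeg v hv
        exact one_lt_card.mpr ⟨p, mem_filter.mpr ⟨hp, hpv⟩, q, mem_filter.mpr ⟨hq, hqv⟩, hpq⟩
    _ = _ := sum_card_bipartiteAbove_eq_sum_card_bipartiteBelow fun v (p : Z × Z) =>
        p.1 = v ∨ p.2 = v

lemma card_filter_endpoint_le_two (V : Finset Z) (p : Z × Z) :
    #{v ∈ V | p.1 = v ∨ p.2 = v} ≤ 2 := by
  calc _ ≤ #{p.1, p.2} := card_le_card fun v hv => by
        rcases (mem_filter.mp hv).2 with rfl | rfl <;> simp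
    _ ≤ 2 := card_le_two

lemma card_filter_endpoint_le_one {V : Finset Z} {p : Z × Z} (hp : p.1 ∉ V ∨ p.2 ∉ V) :
    #{v ∈ V | p.1 = v ∨ p.2 = v} ≤ 1 := by
  rw [card_le_one]
  intro a ha b hb
  simp only [mem_filter] at ha hb
  rcases ha with ⟨ha, rfl | rfl⟩ <;> rcases hb with ⟨hb, h | h⟩ <;> subst h <;> tauto

lemma card_le_card_of_degree {F : Finset (Z × Z)} {V : Finset Z}
    (hdeg : ∀ v ∈ V, ∃ p ∈ F, ∃ q ∈ F, p ≠ q ∧ (p.1 = v ∨ p.2 = v) ∧ (q.1 = v ∨ q.2 = v)) :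
    #V ≤ #F := by
  have := (two_mul_card_le_sum_card_endpoints hdeg).trans
    (sum_le_sum fun p _ => card_filter_endpoint_le_two V p)
  simp only [sum_const, smul_eq_mul] at this
  omega

lemma card_lt_card_of_degree {F : Finset (Z × Z)} {V : Finset Z}
    (hdeg : ∀ v ∈ V, ∃ p ∈ F, ∃ q ∈ F, p ≠ q ∧ (p.1 = v ∨ p.2 = v) ∧ (q.1 = v ∨ q.2 = v))
    (hout : ∃ p ∈ F, p.1 ∉ V ∨ p.2 ∉ V) : #V < #F := by
  obtain ⟨p₀, hp₀, hp₀V⟩ := hout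
  have := (two_mul_card_le_sum_card_endpoints hdeg).trans_lt <|
    sum_lt_sum (fun p _ => card_filter_endpoint_le_two V p)
      ⟨p₀, hp₀, (card_filter_endpoint_le_one hp₀V).trans_lt one_lt_two⟩
  simp only [sum_const, smul_eq_mul] at this
  omega

lemma finrank_range_incidenceMap_lt {T V : Finset Z} {F : Finset (Z × Z)} (hFT : F ⊆ T.offDiag)
    (hF : F.Nonempty)
    (hdeg : ∀ v ∈ V, ∃ p ∈ F, ∃ q ∈ F, p ≠ q ∧ (p.1 = v ∨ p.2 = v) ∧ (q.1 = v ∨ q.2 = v)) :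
    Module.finrank ℝ (LinearMap.range (incidenceMap T V F)) < #F := by
  by_cases hall : ∀ p ∈ F, p.1 ∈ V ∧ p.2 ∈ V
  · refine lt_of_lt_of_le ?_ (card_le_card_of_degree hdeg)
    rw [← Fintype.card_coe V, ← Module.finrank_fintype_fun_eq_card ℝ]
    refine Submodule.finrank_lt (range_incidenceMap_ne_top ?_ (fun v hv => ?_) hall)
    · obtain ⟨p, hp⟩ := hF
      exact ⟨p.1, (hall p hp).1⟩
    · obtain ⟨p, hp, -, -, -, hpv, -⟩ := hdeg v hv
      have := mem_offDiag.mp (hFT hp)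
      rcases hpv with rfl | rfl <;> tauto
  · refine lt_of_le_of_lt ?_ (card_lt_card_of_degree hdeg ?_)
    · simpa using Submodule.finrank_le (LinearMap.range (incidenceMap T V F))
    · push Not at hall
      simpa only [or_iff_not_imp_left, not_not] using hall

lemma exists_circulation {T S : Finset Z} {F : Finset (Z × Z)} (hFT : F ⊆ T.offDiag)
    (hF : F.Nonempty)
    (hdeg : ∀ z ∈ S, ∀ p ∈ F, (p.1 = z ∨ p.2 = z) → ∃ q ∈ F, q ≠ p ∧ (q.1 = z ∨ q.2 = z)) :
    ∃ d : Z × Z → ℝ, d ≠ 0 ∧ (∀ p ∉ F, d p = 0) ∧ ∀ z ∈ S, netFlow T z d = 0 := by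
  classical
  set V : Finset Z := {z ∈ S | ∃ p ∈ F, p.1 = z ∨ p.2 = z}
  have hker : LinearMap.ker (incidenceMap T V F) ≠ ⊥ := by
    rw [← LinearMap.ker_rangeRestrict]
    refine LinearMap.ker_ne_bot_of_finrank_lt ?_
    rw [Module.finrank_fintype_fun_eq_card, Fintype.card_coe]
    refine finrank_range_incidenceMap_lt hFT hF fun v hv => ?_
    obtain ⟨hvS, p, hp, hpv⟩ := mem_filter.mp hv
    obtain ⟨q, hq, hqp, hqv⟩ := hdeg v hvS p hp hpv
    exact ⟨p, hp, q, hq, hqp.symm, hpv, hqv⟩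
  obtain ⟨d, hdker, hd⟩ := (Submodule.ne_bot_iff _).mp hker
  set e := Function.extend ((↑) : F → Z × Z) d 0
  have hsupp : ∀ p ∉ F, e p = 0 := fun p hp => extend_val_eq_zero_of_notMem d hp
  refine ⟨e, fun h => hd (funext fun p => ?_), hsupp, fun z hz => ?_⟩
  · simpa [e, Subtype.val_injective.extend_apply] using congrFun h p
  · by_cases hzV : z ∈ V
    · exact congrFun (LinearMap.mem_ker.mp hdker) ⟨z, hzV⟩
    · refine netFlow_eq_zero_of_forall fun w => ⟨hsupp _ fun h => hzV ?_, hsupp _ fun h => hzV ?_⟩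
      · exact mem_filter.mpr ⟨hz, _, h, Or.inr rfl⟩
      · exact mem_filter.mpr ⟨hz, _, h, Or.inl rfl⟩

lemma exists_ne_notMem_zmultiples {T : Finset Z} {z : Z} {y : Z × Z → ℝ}
    (hz : netFlow T z y ∈ zmultiples (1 : ℝ)) {p : Z × Z} (hp : p ∈ T.offDiag)
    (hpz : p.1 = z ∨ p.2 = z) (hyp : y p ∉ zmultiples (1 : ℝ)) :
    ∃ q ∈ T.offDiag, q ≠ p ∧ (q.1 = z ∨ q.2 = z) ∧ y q ∉ zmultiples (1 : ℝ) := by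
  by_contra! hint
  obtain ⟨w₀, hw₀T, hw₀z, hzT, hpw₀⟩ :
      ∃ w₀ ∈ T, w₀ ≠ z ∧ z ∈ T ∧ (p = (w₀, z) ∨ p = (z, w₀)) := by
    obtain ⟨a, b⟩ := p
    obtain ⟨ha, hb, hab⟩ := mem_offDiag.mp hp
    rcases hpz with rfl | rfl
    · exact ⟨b, hb, hab.symm, ha, Or.inr rfl⟩
    · exact ⟨a, ha, hab, hb, Or.inl rfl⟩
  have hedge : ∀ w ∈ T, w ≠ z → ∀ q, (q = (w, z) ∨ q = (z, w)) → q ≠ p →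
      y q ∈ zmultiples (1 : ℝ) := by
    rintro w hw hwz q (rfl | rfl) hqp
    · exact hint _ (mem_offDiag.mpr ⟨hw, hzT, hwz⟩) hqp (Or.inr rfl)
    · exact hint _ (mem_offDiag.mpr ⟨hzT, hw, hwz.symm⟩) hqp (Or.inl rfl)
  have hrest : ∑ w ∈ T.erase w₀, (y (w, z) - y (z, w)) ∈ zmultiples (1 : ℝ) := by
    refine sum_mem fun w hw => ?_
    obtain ⟨hww₀, hwT⟩ := mem_erase.mp hw
    by_cases hwz : w = z
    · simp [hwz]
    have hne : ∀ q, (q = (w, z) ∨ q = (z, w)) → q ≠ p := by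
      rintro q (rfl | rfl) rfl <;> rcases hpw₀ with h | h <;> simp_all [eq_comm]
    exact sub_mem (hedge w hwT hwz _ (Or.inl rfl) (hne _ (Or.inl rfl)))
      (hedge w hwT hwz _ (Or.inr rfl) (hne _ (Or.inr rfl)))
  have hw₀ : y (w₀, z) - y (z, w₀) ∈ zmultiples (1 : ℝ) := by
    rw [netFlow_apply, ← add_sum_erase _ _ hw₀T] at hz
    simpa using sub_mem hz hrest
  apply hyp
  rcases hpw₀ with rfl | rfl
  · simpa using add_mem hw₀ (hedge w₀ hw₀T hw₀z _ (Or.inr rfl) (by simp [hw₀z]))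
  · simpa using sub_mem (hedge w₀ hw₀T hw₀z _ (Or.inl rfl) (by simp [hw₀z])) hw₀

lemma mem_zmultiples_of_mem_extremePoints {T S : Finset Z} {x : Z × Z → ℝ} {c : Z → ℤ}
    (hx : ∀ p, x p ≠ 0 → p ∈ T.offDiag) {y : Z × Z → ℝ}
    (hy : y ∈ (roundingPolytope T S x c).extremePoints ℝ) (p : Z × Z) :
    y p ∈ zmultiples (1 : ℝ) := by
  classical
  obtain ⟨⟨hybox, hyc⟩, hyext⟩ := hy
  by_contra hp
  set F := T.offDiag.filter fun q => y q ∉ zmultiples (1 : ℝ)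
  have hpF : p ∈ F := by
    refine mem_filter.mpr ⟨hx p fun h => hp ?_, hp⟩
    have h0 : y p = 0 := by simpa [h] using hybox p
    rw [h0]
    exact zero_mem _
  obtain ⟨d, hd0, hdF, hdS⟩ := exists_circulation (S := S) (filter_subset _ _) ⟨p, hpF⟩
    fun z hz q hq hqz => by
      obtain ⟨hqT, hqfrac⟩ := mem_filter.mp hq
      obtain ⟨r, hrT, hrq, hrz, hrfrac⟩ :=
        exists_ne_notMem_zmultiples (by rw [hyc z hz]; exact intCast_mem_zmultiples_one _)
          hqT hqz hqfrac
      exact ⟨r, mem_filter.mpr ⟨hrT, hrfrac⟩, hrq, hrz⟩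
  obtain ⟨ε, hε0, hminus, hplus⟩ := exists_sub_add_smul_mem_roundingPolytope ⟨hybox, hyc⟩
    (fun q hq => (mem_filter.mp hq).2) hdF hdS
  have := hyext hminus hplus (mem_openSegment_sub_add y (ε • d))
  exact hε0 (by simpa [hd0] using this)

theorem exists_int_flow_between_floor_ceil (T S : Finset Z) (x : Z × Z → ℝ)
    (hx : ∀ p, x p ≠ 0 → p ∈ T.offDiag) (c : Z → ℤ) (hc : ∀ z ∈ S, netFlow T z x = c z) :
    ∃ y : Z × Z → ℤ, (∀ p, ⌊x p⌋ ≤ y p ∧ y p ≤ ⌈x p⌉) ∧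
      ∀ z ∈ S, netFlow T z (fun p => y p) = c z := by
  obtain ⟨y, hy⟩ := (isCompact_roundingPolytope T S x c).extremePoints_nonempty
    ⟨x, fun p => ⟨Int.floor_le _, Int.le_ceil _⟩, hc⟩
  choose k hk using fun p => mem_zmultiples_iff.mp (mem_zmultiples_of_mem_extremePoints hx hy p)
  simp only [zsmul_one] at hk
  have hyk : (fun p => (k p : ℝ)) = y := funext hk
  obtain ⟨hybox, hyc⟩ := hy.1
  refine ⟨k, fun p => ?_, hyk ▸ hyc⟩
  have := hybox p
  rw [← hk p] at this
  exact ⟨by exact_mod_cast this.1, by exact_mod_cast this.2⟩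

end Flows

lemma abs_le_ceil_abs_of_floor_le_of_le_ceil {x : ℝ} {k : ℤ} (h₁ : ⌊x⌋ ≤ k) (h₂ : k ≤ ⌈x⌉) :
    |k| ≤ ⌈|x|⌉ :=
  abs_le.mpr ⟨by linarith [Int.ceil_neg (a := x), Int.ceil_mono (neg_le_abs x)],
    h₂.trans (Int.ceil_mono (le_abs_self x))⟩

section Chains

variable {Z : Type*} [MetricSpace Z]

lemma ufBoundaryAt_eq_sum {R : Type*} [NormedRing R] (y : Z → Z → R) {z : Z} {T : Finset Z}
    (hT : ∀ w, y z w ≠ 0 ∨ y w z ≠ 0 → w ∈ T) : ufBoundaryAt y z = ∑ w ∈ T, (y w z - y z w) := by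
  rw [ufBoundaryAt, finsum_eq_sum_of_support_subset _ fun w hw => hT w (Or.inr hw),
    finsum_eq_sum_of_support_subset _ fun w hw => hT w (Or.inl hw), sum_sub_distrib]

lemma IsUFOneChain.of_abs_le_ceil_abs {b : Z → Z → ℝ} (hb : IsUFOneChain b) {y : Z → Z → ℤ}
    (hy : ∀ z w, |y z w| ≤ ⌈|b z w|⌉) : IsUFOneChain y := by
  obtain ⟨⟨M, hM⟩, ⟨l, hl⟩, hfin⟩ := hb
  have hsupp : ∀ z w, y z w ≠ 0 → b z w ≠ 0 := fun z w hy0 hb0 =>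
    hy0 (abs_nonpos_iff.mp (by simpa [hb0] using hy z w))
  refine ⟨⟨⌈M⌉, fun z w => ?_⟩, ⟨l, fun z w h => hl z w (hsupp z w h)⟩,
    fun z => (hfin z).subset fun w hw => hw.imp (hsupp z w) (hsupp w z)⟩
  rw [Int.norm_eq_abs]
  exact_mod_cast (hy z w).trans (Int.ceil_mono (hM z w))

lemma exists_int_chain_boundary_eq_on {b : Z → Z → ℝ}
    (hfin : ∀ z, {w | b z w ≠ 0 ∨ b w z ≠ 0}.Finite) {c : Z → ℤ}
    (hc : ∀ z, (c z : ℝ) = ufBoundaryAt b z) (u : Finset Z) :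
    ∃ y : Z × Z → ℤ, (∀ p, |y p| ≤ ⌈|b p.1 p.2|⌉) ∧
      ∀ z ∈ u, ufBoundaryAt (Function.curry y) z = c z := by
  classical
  set T := u ∪ u.biUnion fun z => (hfin z).toFinset
  have hnbr : ∀ z ∈ u, ∀ w, b z w ≠ 0 ∨ b w z ≠ 0 → w ∈ T := fun z hz w hw =>
    mem_union_right _ (mem_biUnion.mpr ⟨z, hz, (hfin z).mem_toFinset.mpr hw⟩)
  set x : Z × Z → ℝ := fun p => if p ∈ T.offDiag then b p.1 p.2 else 0
  have hx : ∀ p, x p ≠ 0 → p ∈ T.offDiag := fun p hp => by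
    by_contra h
    exact hp (if_neg h)
  have hxc : ∀ z ∈ u, netFlow T z x = c z := fun z hz => by
    rw [hc, ufBoundaryAt_eq_sum b (hnbr z hz), netFlow_apply]
    refine sum_congr rfl fun w hw => ?_
    by_cases hwz : w = z
    · simp [hwz]
    · have hzT : z ∈ T := mem_union_left _ hz
      simp [x, hw, hzT, hwz, Ne.symm hwz]
  obtain ⟨y, hyx, hyc⟩ := exists_int_flow_between_floor_ceil T u x hx c hxc
  have hyb : ∀ p, |y p| ≤ ⌈|x p|⌉ := fun p =>
    abs_le_ceil_abs_of_floor_le_of_le_ceil (hyx p).1 (hyx p).2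
  have hyT : ∀ p, y p ≠ 0 → p ∈ T.offDiag := fun p hp => hx p fun h0 =>
    hp (abs_nonpos_iff.mp (by simpa [h0] using hyb p))
  refine ⟨y, fun p => (hyb p).trans (Int.ceil_mono ?_), fun z hz => ?_⟩
  · simp only [x]
    split_ifs <;> simp
  · rw [ufBoundaryAt_eq_sum (T := T) _ fun w hw => ?_]
    · have h := hyc z hz
      simp only [netFlow_apply] at h
      simp only [Function.curry_apply]
      exact_mod_cast h
    · rcases hw with hw | hw
      · exact (mem_offDiag.mp (hyT _ hw)).2.1
      · exact (mem_offDiag.mp (hyT _ hw)).1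

theorem exists_int_chain_boundary_eq {b : Z → Z → ℝ}
    (hfin : ∀ z, {w | b z w ≠ 0 ∨ b w z ≠ 0}.Finite) {c : Z → ℤ}
    (hc : ∀ z, (c z : ℝ) = ufBoundaryAt b z) :
    ∃ y : Z → Z → ℤ, (∀ z w, |y z w| ≤ ⌈|b z w|⌉) ∧ ∀ z, ufBoundaryAt y z = c z := by
  set K : Set (Z × Z → ℤ) := Set.univ.pi fun p => Set.Icc (-⌈|b p.1 p.2|⌉) ⌈|b p.1 p.2|⌉
  set N : Z → Finset Z := fun z => (hfin z).toFinset
  set C : Z → Set (Z × Z → ℤ) := fun z => {y | ∑ w ∈ N z, (y (w, z) - y (z, w)) = c z}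
  have hK : IsCompact K := isCompact_univ_pi fun p => (Set.finite_Icc _ _).isCompact
  have hC : ∀ z, IsClosed (C z) := fun z => isClosed_eq (by fun_prop) continuous_const
  have hKC : ∀ y ∈ K, ∀ z,
      ufBoundaryAt (Function.curry y) z = ∑ w ∈ N z, (y (w, z) - y (z, w)) := by
    intro y hy z
    have hsupp : ∀ p, y p ≠ 0 → b p.1 p.2 ≠ 0 := fun p hyp hbp => hyp <| by
      simpa [hbp] using hy p (Set.mem_univ p)
    exact ufBoundaryAt_eq_sum _ fun w hw =>
      (hfin z).mem_toFinset.mpr (hw.imp (hsupp (z, w)) (hsupp (w, z)))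
  obtain ⟨y, hyK, hyC⟩ := hK.inter_iInter_nonempty C hC fun u => by
    obtain ⟨y, hyb, hyu⟩ := exists_int_chain_boundary_eq_on hfin hc u
    have hyK : y ∈ K := fun p _ => abs_le.mp (hyb p)
    exact ⟨y, hyK, Set.mem_iInter₂.mpr fun z hz => (hKC y hyK z).symm.trans (hyu z hz)⟩
  exact ⟨Function.curry y, fun z w => abs_le.mpr (hyK (z, w) (Set.mem_univ _)),
    fun z => (hKC y hyK z).trans (Set.mem_iInter.mp hyC z)⟩

end Chains

theorem stmt12_general {Z : Type*} [MetricSpace Z]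
    (c : Z → ℤ) (hreal : UFBoundsZero (fun z => (c z : ℝ))) :
    UFBoundsZero c := by
  obtain ⟨b, hb, hbc⟩ := hreal
  obtain ⟨y, hyb, hyc⟩ := exists_int_chain_boundary_eq hb.2.2 hbc
  exact ⟨y, hb.of_abs_le_ceil_abs hyb, fun z => (hyc z).symm⟩

/-- If a uniformly bounded integer 0-cycle bounds a uniformly finite 1-chain with
real coefficients, it bounds one with integer coefficients: the map
`H₀^{uf}(Z; ℤ) → H₀^{uf}(Z; ℝ)` is injective. -/
theorem stmt12 {Z : Type*} [MetricSpace Z]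
    (hud : UniformlyDiscrete Z) (hbg : BoundedGeometry Z)
    (c : Z → ℤ) (hc : ∃ K : ℤ, ∀ z, |c z| ≤ K)
    (hreal : UFBoundsZero (fun z => (c z : ℝ))) :
    UFBoundsZero c :=
  stmt12_general c hreal
end

section
/- Let Z be an infinite, coarsely connected, uniformly discrete space of bounded geometry. Then the natural map H₀^{uf}(Z; ℤ) → H₀^{uf}(Z; ℝ) is an isomorphism. -/
/-- Coarse connectivity: points can be joined by chains with steps `< r`. -/
def CoarselyConnected (Z : Type*) [MetricSpace Z] : Prop :=
  ∃ r > (0 : ℝ), ∀ x y : Z, Relation.ReflTransGen (fun a b : Z => dist a b < r) x y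

/-!
Injectivity. If an integer 0-chain `c` bounds a real uniformly finite 1-chain `b`, write
`b = ⌊b⌋ + β` with `β` in `[0, 1)`; then `∂β` is integral. On a finite graph a `[0, 1]`-valued flow
with integral net flows can be rounded to a `{0, 1}`-valued flow with the same net flows: the
fractional edges meet every vertex they touch at least twice, so they carry a nonzero circulation,
and moving along it until a coordinate hits `0` or `1` leaves one fewer fractional edge. Rounding
near each finite set of vertices, with everything else collapsed to a single vertex, and
compactness of `{0, 1}^(Z × Z)` give a global `{0, 1}`-valued chain `a` with `∂a = ∂β`, and then
`∂(⌊b⌋ + a) = c`.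

Surjectivity. The Rips graph of `Z` is infinite, connected and locally finite. In a breadth-first
tree, let each vertex with infinitely many descendants step to such a child and every other
vertex step to its parent: this map `f` has no periodic points and finite basins, so its orbits
are rays to infinity. For a bounded real chain `c` let `T z` be the sum of `c` over the basin of
`z`. Then `c z = T z - ∑_{f w = z} T w`, and moving the fractional part of `T z` along the edge
`z → f z` shows that `c` minus the integer chain `⌊T z⌋ - ∑_{f w = z} ⌊T w⌋` is the boundary of a
chain with coefficients in `[0, 1)`, whose boundary is bounded because `f` has bounded fan-in.
-/

open Finset Function

namespace UFHomology

lemma exists_add_mul_mem_Icc_and_eq_zero_or_one {ι : Type*} [Fintype ι] {g θ : ι → ℝ}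
    (hg : ∀ i, g i ∈ Set.Icc 0 1) (hθ : θ ≠ 0) :
    ∃ τ : ℝ, (∀ i, g i + τ * θ i ∈ Set.Icc 0 1) ∧
      ∃ i, θ i ≠ 0 ∧ (g i + τ * θ i = 0 ∨ g i + τ * θ i = 1) := by
  classical
  -- the time at which `g + τ • θ` leaves the unit cube through the `i`-th coordinate
  let exit i := if 0 < θ i then (1 - g i) / θ i else -g i / θ i
  have hexit : ∀ i, θ i ≠ 0 → 0 ≤ exit i := fun i hi => by
    have := hg i
    unfold exit; split_ifs with h
    · exact div_nonneg (by linarith [this.2]) h.le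
    · exact div_nonneg_of_nonpos (by linarith [this.1]) (not_lt.1 h)
  obtain ⟨i₀, hi₀, hmin⟩ := Finset.exists_min_image {i | θ i ≠ 0} exit
    (by simpa [Finset.Nonempty, Function.ne_iff] using hθ)
  simp only [Finset.mem_filter, Finset.mem_univ, true_and] at hi₀ hmin
  refine ⟨exit i₀, fun i => ?_, i₀, hi₀, ?_⟩
  · obtain ⟨hg0, hg1⟩ := hg i
    have hτ := hexit i₀ hi₀
    rcases lt_trichotomy (θ i) 0 with hneg | hzero | hpos
    · have : exit i₀ ≤ -g i / θ i := by simpa [exit, not_lt.2 hneg.le] using hmin i hneg.ne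
      rw [le_div_iff_of_neg hneg] at this
      constructor <;> nlinarith
    · simp [hzero, hg0, hg1]
    · have : exit i₀ ≤ (1 - g i) / θ i := by simpa [exit, hpos] using hmin i hpos.ne'
      rw [le_div_iff₀ hpos] at this
      constructor <;> nlinarith
  · unfold exit; split_ifs
    · right; field_simp; ring
    · left; field_simp; ring

lemma card_endpoints_le {E V : Type*} [DecidableEq V] (s t : E → V) (F : Finset E)
    (hdeg : ∀ e ∈ F, ∀ v, (s e = v ∨ t e = v) →
      s e = t e ∨ ∃ e' ∈ F, e' ≠ e ∧ (s e' = v ∨ t e' = v)) :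
    #(F.image s ∪ F.image t) ≤ #F := by
  classical
  set W := F.image s ∪ F.image t
  have hdeg2 : ∀ v ∈ W, 2 ≤ #{e ∈ F | s e = v} + #{e ∈ F | t e = v} := by
    intro v hv
    obtain ⟨e, he, hev⟩ : ∃ e ∈ F, s e = v ∨ t e = v := by
      simp only [W, mem_union, mem_image] at hv
      rcases hv with ⟨e, he, h⟩ | ⟨e, he, h⟩ <;> exact ⟨e, he, by tauto⟩
    rcases hdeg e he v hev with hloop | ⟨e', he', hne, he'v⟩
    · have hs : 1 ≤ #{e ∈ F | s e = v} := card_pos.2 ⟨e, by grind⟩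
      have ht : 1 ≤ #{e ∈ F | t e = v} := card_pos.2 ⟨e, by grind⟩
      omega
    · calc 2 = #{e, e'} := (card_pair hne.symm).symm
        _ ≤ #({e ∈ F | s e = v} ∪ {e ∈ F | t e = v}) :=
          card_le_card (by intro x hx; simp at hx; grind)
        _ ≤ _ := card_union_le _ _
  have hsum : ∑ v ∈ W, (#{e ∈ F | s e = v} + #{e ∈ F | t e = v}) = 2 * #F := by
    rw [sum_add_distrib,
      ← card_eq_sum_card_fiberwise fun e he => mem_union_left _ (mem_image_of_mem s he),
      ← card_eq_sum_card_fiberwise fun e he => mem_union_right _ (mem_image_of_mem t he)]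
    ring
  have := card_nsmul_le_sum W _ 2 hdeg2
  simp only [smul_eq_mul] at this
  omega

section NetFlow

variable {E V M : Type*} [Fintype E] [DecidableEq V] [AddCommGroup M] (s t : E → V)

def netFlow (g : E → M) (v : V) : M :=
  ∑ e with t e = v, g e - ∑ e with s e = v, g e

lemma netFlow_map {N : Type*} [AddCommGroup N] (φ : M →+ N) (g : E → M) (v : V) :
    netFlow s t (φ ∘ g) v = φ (netFlow s t g v) := by
  simp [netFlow, map_sum]

def netFlowLinearMap : (E → ℝ) →ₗ[ℝ] V → ℝ where
  toFun := netFlow s t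
  map_add' g g' := by ext v; simp only [netFlow, Pi.add_apply, sum_add_distrib]; abel
  map_smul' c g := by ext v; simp [netFlow, mul_sum, mul_sub]

variable {s t}

lemma sum_netFlow_eq_zero {W : Finset V} {g : E → M} (hW : ∀ e, g e ≠ 0 → s e ∈ W ∧ t e ∈ W) :
    ∑ v ∈ W, netFlow s t g v = 0 := by
  simp only [netFlow, sum_sub_distrib, sum_fiberwise_eq_sum_filter,
    sum_filter_of_ne fun e _ he => (hW e he).1, sum_filter_of_ne fun e _ he => (hW e he).2,
    sub_self]

lemma netFlow_mem_of_forall_ne {G : AddSubgroup M} {g : E → M} (v₀ : V)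
    (h : ∀ v ≠ v₀, netFlow s t g v ∈ G) (v : V) : netFlow s t g v ∈ G := by
  classical
  rcases ne_or_eq v v₀ with hv | rfl
  · exact h v hv
  let W := insert v (univ.image s ∪ univ.image t)
  have hsum := sum_netFlow_eq_zero (s := s) (t := t) (g := g) (W := W) fun e _ => by simp [W]
  rw [← add_sum_erase _ _ (mem_insert_self _ _), add_eq_zero_iff_eq_neg] at hsum
  exact hsum ▸ neg_mem (sum_mem fun w hw => h w (ne_of_mem_erase hw))

lemma eq_zero_of_netFlow_eq_zero {g : E → M} {e : E} {v : V} (hst : s e ≠ t e)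
    (hv : s e = v ∨ t e = v) (hg : ∀ e' ≠ e, s e' = v ∨ t e' = v → g e' = 0)
    (h : netFlow s t g v = 0) : g e = 0 := by
  have hsum : ∀ {p : E → V}, (∀ e', p e' = v → s e' = v ∨ t e' = v) → p e = v →
      ∑ e' with p e' = v, g e' = g e := fun hp hpe =>
    sum_eq_single_of_mem e (by simpa using hpe) fun e' he' hne =>
      hg e' hne (hp e' (by simpa using he'))
  have hzero : ∀ {p : E → V}, (∀ e', p e' = v → s e' = v ∨ t e' = v) → p e ≠ v →
      ∑ e' with p e' = v, g e' = 0 := fun hp hpe =>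
    sum_eq_zero fun e' he' => hg e' (by rintro rfl; simp_all) (hp e' (by simpa using he'))
  rcases hv with hs | ht
  · rwa [netFlow, hsum (fun _ => Or.inl) hs, hzero (fun _ => Or.inr) (hs ▸ hst.symm), zero_sub,
      neg_eq_zero] at h
  · rwa [netFlow, hsum (fun _ => Or.inr) ht, hzero (fun _ => Or.inl) (ht ▸ hst), sub_zero] at h

variable (s t) in
lemma exists_circulation (F : Finset E) (hF : F.Nonempty)
    (hdeg : ∀ e ∈ F, ∀ v, (s e = v ∨ t e = v) →
      s e = t e ∨ ∃ e' ∈ F, e' ≠ e ∧ (s e' = v ∨ t e' = v)) :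
    ∃ θ : E → ℝ, θ ≠ 0 ∧ (∀ e ∉ F, θ e = 0) ∧ ∀ v, netFlow s t θ v = 0 := by
  classical
  set W := F.image s ∪ F.image t
  have hW : ∀ e ∈ F, s e ∈ W ∧ t e ∈ W := fun e he =>
    ⟨mem_union_left _ (mem_image_of_mem s he), mem_union_right _ (mem_image_of_mem t he)⟩
  let extend : (F → ℝ) →ₗ[ℝ] E → ℝ := ExtendByZero.linearMap ℝ Subtype.val
  have hextend : ∀ θ e, e ∉ F → extend θ e = 0 := fun θ e he => by
    simp [extend, extend_apply' (f := Subtype.val) θ 0 e (by rintro ⟨a, rfl⟩; exact he a.2)]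
  let Φ : (F → ℝ) →ₗ[ℝ] W → ℝ :=
    LinearMap.funLeft ℝ ℝ Subtype.val ∘ₗ netFlowLinearMap s t ∘ₗ extend
  -- `Φ` lands in a hyperplane, and `#W ≤ #F`, so it has a nontrivial kernel
  let H : Submodule ℝ (W → ℝ) := LinearMap.ker (∑ w, LinearMap.proj w)
  have hΦH : ∀ θ, Φ θ ∈ H := fun θ => by
    simpa [H, Φ, LinearMap.funLeft_apply, netFlowLinearMap, sum_attach] using
      sum_netFlow_eq_zero (W := W) fun e he => hW e (by_contra fun h => he (hextend θ e h))
  have hH : H ≠ ⊤ := by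
    obtain ⟨e, he⟩ := hF
    intro htop
    have : Pi.single (⟨s e, (hW e he).1⟩ : W) (1 : ℝ) ∈ H := htop ▸ Submodule.mem_top
    simp [H] at this
  have hrank : Module.finrank ℝ H < Module.finrank ℝ (F → ℝ) :=
    calc Module.finrank ℝ H < Module.finrank ℝ (W → ℝ) := Submodule.finrank_lt hH
      _ = #W := by simp
      _ ≤ #F := card_endpoints_le s t F hdeg
      _ = Module.finrank ℝ (F → ℝ) := by simp
  obtain ⟨θ, hθker, hθ⟩ := (Submodule.ne_bot_iff _).1
    (LinearMap.ker_ne_bot_of_finrank_lt (f := Φ.codRestrict H hΦH) hrank)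
  have hΦθ : Φ θ = 0 := by simpa [Subtype.ext_iff] using hθker
  refine ⟨extend θ, fun h => hθ ?_, hextend θ, fun v => ?_⟩
  · ext e
    simpa [extend, Subtype.val_injective.extend_apply] using congrFun h e
  · by_cases hv : v ∈ W
    · simpa [Φ, LinearMap.funLeft_apply, netFlowLinearMap] using congrFun hΦθ ⟨v, hv⟩
    · have hzero : ∀ e, (s e = v ∨ t e = v) → extend θ e = 0 := fun e hev =>
        hextend θ e fun he => hv (by rcases hev with h | h <;> simp [← h, hW e he])
      simp [netFlow, sum_eq_zero fun e he => hzero e (Or.inr (mem_filter.1 he).2),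
        sum_eq_zero fun e he => hzero e (Or.inl (mem_filter.1 he).2)]

lemma exists_ne_apply_notMem_of_netFlow_mem {G : AddSubgroup M} {g : E → M}
    (hint : ∀ v, netFlow s t g v ∈ G) {e : E} (he : g e ∉ G) (hst : s e ≠ t e) {v : V}
    (hv : s e = v ∨ t e = v) : ∃ e' ≠ e, g e' ∉ G ∧ (s e' = v ∨ t e' = v) := by
  by_contra! hcon
  -- in `M ⧸ G` the net flow at `v` vanishes, and only `e` contributes to it
  let π := QuotientAddGroup.mk' G
  refine he ((QuotientAddGroup.eq_zero_iff _).1 (eq_zero_of_netFlow_eq_zero (g := π ∘ g) hst hv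
    (fun e' hne he'v => ?_) ?_))
  · refine (QuotientAddGroup.eq_zero_iff _).2 (by_contra fun h => ?_)
    have := hcon e' hne h
    tauto
  · rw [netFlow_map]
    exact (QuotientAddGroup.eq_zero_iff _).2 (hint v)

lemma exists_netFlow_eq_of_notMem_zmultiples {g : E → ℝ} (hg : ∀ e, g e ∈ Set.Icc 0 1)
    (hint : ∀ v, netFlow s t g v ∈ AddSubgroup.zmultiples (1 : ℝ))
    {e₁ : E} (he₁ : g e₁ ∉ AddSubgroup.zmultiples (1 : ℝ)) :
    ∃ g' : E → ℝ, (∀ e, g' e ∈ Set.Icc 0 1) ∧ (∀ v, netFlow s t g' v = netFlow s t g v) ∧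
      (∀ e, g e ∈ AddSubgroup.zmultiples (1 : ℝ) → g' e = g e) ∧
      #{e | g' e ∉ AddSubgroup.zmultiples (1 : ℝ)} <
        #{e | g e ∉ AddSubgroup.zmultiples (1 : ℝ)} := by
  classical
  set F : Finset E := {e | g e ∉ AddSubgroup.zmultiples (1 : ℝ)}
  have hF : ∀ e, e ∈ F ↔ g e ∉ AddSubgroup.zmultiples (1 : ℝ) := by simp [F]
  obtain ⟨θ, hθ, hθF, hθflow⟩ := exists_circulation s t F ⟨e₁, (hF e₁).2 he₁⟩
    fun e he v hv => or_iff_not_imp_left.2 fun hst => by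
      obtain ⟨e', hne, he', he'v⟩ := exists_ne_apply_notMem_of_netFlow_mem hint ((hF e).1 he) hst hv
      exact ⟨e', (hF e').2 he', hne, he'v⟩
  obtain ⟨τ, hτ, e₀, he₀, he₀int⟩ := exists_add_mul_mem_Icc_and_eq_zero_or_one hg hθ
  have hfix : ∀ e, g e ∈ AddSubgroup.zmultiples (1 : ℝ) → g e + τ * θ e = g e := fun e he => by
    simp [hθF e (mt (hF e).1 (not_not.2 he))]
  refine ⟨g + τ • θ, hτ, fun v => ?_, hfix, card_lt_card ?_⟩
  · have : netFlowLinearMap s t (g + τ • θ) = netFlowLinearMap s t g := by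
      rw [map_add, map_smul]
      ext v
      simp [netFlowLinearMap, hθflow]
    exact congrFun this v
  · refine (ssubset_iff_of_subset fun e => ?_).2 ⟨e₀, ?_, ?_⟩
    · simp only [mem_filter, mem_univ, true_and, Pi.add_apply, Pi.smul_apply, smul_eq_mul]
      exact fun he => (hF e).2 fun hge => he ((hfix e hge).symm ▸ hge)
    · exact (hF e₀).2 fun h => he₀ (hθF e₀ (by simpa [F] using h))
    · simp only [mem_filter, mem_univ, true_and, not_not, Pi.add_apply, Pi.smul_apply, smul_eq_mul]
      rcases he₀int with h | h <;> rw [h]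
      exacts [zero_mem _, AddSubgroup.mem_zmultiples 1]

variable (s t) in
theorem exists_int_netFlow_eq (g : E → ℝ) (hg : ∀ e, g e ∈ Set.Icc 0 1)
    (hint : ∀ v, netFlow s t g v ∈ AddSubgroup.zmultiples (1 : ℝ)) :
    ∃ h : E → ℤ, (∀ e, h e ∈ Set.Icc 0 1) ∧
      (∀ e, g e ∈ AddSubgroup.zmultiples (1 : ℝ) → (h e : ℝ) = g e) ∧
      ∀ v, netFlow s t (fun e => (h e : ℝ)) v = netFlow s t g v := by
  classical
  induction hn : #{e | g e ∉ AddSubgroup.zmultiples (1 : ℝ)} using Nat.strong_induction_on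
    generalizing g with
  | _ n ih =>
  by_cases hfrac : ∃ e, g e ∉ AddSubgroup.zmultiples (1 : ℝ)
  · obtain ⟨e₁, he₁⟩ := hfrac
    obtain ⟨g', hg', hflow, hfix, hlt⟩ := exists_netFlow_eq_of_notMem_zmultiples hg hint he₁
    obtain ⟨h, h01, hhfix, hhflow⟩ :=
      ih _ (hn ▸ hlt) g' hg' (fun v => hflow v ▸ hint v) rfl
    exact ⟨h, h01, fun e he => (hhfix e (hfix e he ▸ he)).trans (hfix e he),
      fun v => (hhflow v).trans (hflow v)⟩
  · simp only [not_exists, not_not] at hfrac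
    choose h hh using fun e => by simpa using AddSubgroup.mem_zmultiples_iff.1 (hfrac e)
    refine ⟨h, fun e => ?_, fun e _ => hh e, fun v => by simp_rw [hh]⟩
    have := hg e
    rw [← hh e] at this
    exact ⟨by exact_mod_cast this.1, by exact_mod_cast this.2⟩

end NetFlow

section Collapse

variable {Z : Type*} [DecidableEq Z]

def collapse (S : Finset Z) (z : Z) : Option S :=
  if h : z ∈ S then some ⟨z, h⟩ else none

lemma netFlow_collapse {M : Type*} [AddCommGroup M] {S N : Finset Z} (x : Z → Z → M)
    {z : Z} (hz : z ∈ S) (hzN : z ∈ N) :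
    netFlow (E := ↥(N ×ˢ N)) (fun e => collapse S e.1.1) (fun e => collapse S e.1.2)
      (fun e => x e.1.1 e.1.2) (some ⟨z, hz⟩) = ∑ w ∈ N, (x w z - x z w) := by
  have hq : ∀ w, collapse S w = some ⟨z, hz⟩ ↔ w = z := fun w => by
    unfold collapse; split_ifs with h <;> simp [Subtype.ext_iff]; rintro rfl; exact h hz
  simp only [netFlow, sum_filter, hq, sum_sub_distrib]
  rw [sum_coe_sort (N ×ˢ N) (fun p => if p.2 = z then x p.1 p.2 else 0),
    sum_coe_sort (N ×ˢ N) (fun p => if p.1 = z then x p.1 p.2 else 0), sum_product, sum_product]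
  simp [sum_ite_eq', hzN]

end Collapse

section Injectivity

variable {Z : Type*} [MetricSpace Z]

lemma ufBoundaryAt_eq_sum {R : Type*} [NormedRing R] {b : Z → Z → R} {z : Z} {N : Finset Z}
    (hN : ∀ w, b w z ≠ 0 ∨ b z w ≠ 0 → w ∈ N) : ufBoundaryAt b z = ∑ w ∈ N, (b w z - b z w) := by
  rw [ufBoundaryAt, finsum_eq_sum_of_support_subset _ fun w hw => mem_coe.2 (hN w (Or.inl hw)),
    finsum_eq_sum_of_support_subset _ fun w hw => mem_coe.2 (hN w (Or.inr hw)), sum_sub_distrib]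

lemma exists_int_chain_boundary_eq_on {β : Z → Z → ℝ} (hβ : ∀ z w, β z w ∈ Set.Icc 0 1)
    (hfin : ∀ z, {w | β z w ≠ 0 ∨ β w z ≠ 0}.Finite)
    (hint : ∀ z, ufBoundaryAt β z ∈ AddSubgroup.zmultiples (1 : ℝ)) (S : Finset Z) :
    ∃ a : Z → Z → ℤ, (∀ z w, a z w ∈ Set.Icc 0 1) ∧ (∀ z w, β z w = 0 → a z w = 0) ∧
      ∀ z ∈ S, ((ufBoundaryAt a z : ℤ) : ℝ) = ufBoundaryAt β z := by
  classical
  -- round `β` on the finite graph of edges near `S`, with the rest of `Z` collapsed to one vertex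
  let N := S ∪ S.biUnion fun z => (hfin z).toFinset
  have hSN : S ⊆ N := subset_union_left
  have hβN : ∀ z ∈ S, ∑ w ∈ N, (β w z - β z w) = ufBoundaryAt β z := fun z hz =>
    (ufBoundaryAt_eq_sum fun w hw => mem_union_right _ (mem_biUnion.2 ⟨z, hz, by simp; tauto⟩)).symm
  let s e := collapse S (e : ↥(N ×ˢ N)).1.1
  let t e := collapse S (e : ↥(N ×ˢ N)).1.2
  have hint' : ∀ v, netFlow s t (fun e => β e.1.1 e.1.2) v ∈ AddSubgroup.zmultiples 1 :=
    netFlow_mem_of_forall_ne none fun v hv => by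
      obtain ⟨z, rfl⟩ := Option.ne_none_iff_exists'.1 hv
      rw [netFlow_collapse β z.2 (hSN z.2), hβN z z.2]
      exact hint z
  obtain ⟨h, h01, hfix, hflow⟩ := exists_int_netFlow_eq s t _ (fun e => hβ _ _) hint'
  let a : Z → Z → ℤ := fun z w => if hzw : (z, w) ∈ N ×ˢ N then h ⟨(z, w), hzw⟩ else 0
  refine ⟨a, fun z w => ?_, fun z w hzw => ?_, fun z hz => ?_⟩
  · unfold a; split_ifs
    exacts [h01 _, ⟨le_rfl, zero_le_one⟩]
  · unfold a; split_ifs with hmem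
    · have := hfix ⟨(z, w), hmem⟩ (by simp [hzw])
      simp only [hzw] at this
      exact_mod_cast this
    · rfl
  · have ha : ufBoundaryAt a z = ∑ w ∈ N, (a w z - a z w) := ufBoundaryAt_eq_sum fun w hw => by
      by_contra hwN
      simp [a, hwN] at hw
    have hah : (fun e : ↥(N ×ˢ N) => a e.1.1 e.1.2) = h := funext fun e => dif_pos e.2
    rw [ha, ← netFlow_collapse a hz (hSN hz), hah, ← hβN z hz, ← netFlow_collapse β hz (hSN hz),
      ← hflow]
    exact (netFlow_map _ _ (Int.castAddHom ℝ) h _).symm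

theorem exists_int_chain_boundary_eq {β : Z → Z → ℝ} (hβ : ∀ z w, β z w ∈ Set.Icc 0 1)
    (hfin : ∀ z, {w | β z w ≠ 0 ∨ β w z ≠ 0}.Finite)
    (hint : ∀ z, ufBoundaryAt β z ∈ AddSubgroup.zmultiples (1 : ℝ)) :
    ∃ a : Z → Z → ℤ, (∀ z w, a z w ∈ Set.Icc 0 1) ∧ (∀ z w, β z w = 0 → a z w = 0) ∧
      ∀ z, ((ufBoundaryAt a z : ℤ) : ℝ) = ufBoundaryAt β z := by
  classical
  let K : Set (Z → Z → ℤ) := Set.univ.pi fun z => Set.univ.pi fun w =>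
    {m | m ∈ Set.Icc 0 1 ∧ (β z w = 0 → m = 0)}
  have hK : IsCompact K := isCompact_univ_pi fun z => isCompact_univ_pi fun w =>
    ((Set.finite_Icc 0 1).subset fun m hm => hm.1).isCompact
  -- on `K`, the boundary at `z` only depends on the finitely many coordinates near `z`
  let φ z (a : Z → Z → ℤ) : ℤ := ∑ w ∈ (hfin z).toFinset, (a w z - a z w)
  have hφ : ∀ a ∈ K, ∀ z, ufBoundaryAt a z = φ z a := fun a ha z =>
    have hsupp x y : β x y = 0 → a x y = 0 := (ha x trivial y trivial).2
    ufBoundaryAt_eq_sum fun w hw =>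
      (hfin z).mem_toFinset.2 (hw.symm.imp (mt (hsupp z w)) (mt (hsupp w z)))
  have hC : ∀ z, IsClosed {a | (φ z a : ℝ) = ufBoundaryAt β z} := fun z =>
    (isClosed_discrete {m : ℤ | (m : ℝ) = ufBoundaryAt β z}).preimage (f := φ z) <|
      continuous_finsetSum _ fun w _ => by fun_prop
  obtain ⟨a, haK, haC⟩ := hK.inter_iInter_nonempty _ hC fun S => by
    obtain ⟨a, ha01, hasupp, ha⟩ := exists_int_chain_boundary_eq_on hβ hfin hint S
    have haK : a ∈ K := fun z _ w _ => ⟨ha01 z w, hasupp z w⟩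
    exact ⟨a, haK, Set.mem_iInter₂.2 fun z hz => by simp [← hφ a haK, ha z hz]⟩
  refine ⟨a, fun z w => (haK z trivial w trivial).1, fun z w => (haK z trivial w trivial).2,
    fun z => ?_⟩
  rw [hφ a haK]
  exact Set.mem_iInter.1 haC z

lemma isUFOneChain_floor_add {b : Z → Z → ℝ} (hb : IsUFOneChain b) {a : Z → Z → ℤ}
    (ha : ∀ z w, a z w ∈ Set.Icc 0 1) (ha0 : ∀ z w, b z w = 0 → a z w = 0) :
    IsUFOneChain fun z w => ⌊b z w⌋ + a z w := by
  obtain ⟨⟨M, hM⟩, ⟨l, hl⟩, hfin⟩ := hb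
  have h0 : ∀ z w, b z w = 0 → ⌊b z w⌋ + a z w = 0 := fun z w h => by simp [h, ha0 z w h]
  refine ⟨⟨M + 2, fun z w => ?_⟩, ⟨l, fun z w hzw => hl z w (mt (h0 z w) hzw)⟩,
    fun z => (hfin z).subset fun w hw => hw.imp (mt (h0 z w)) (mt (h0 w z))⟩
  have hbM := abs_le.1 ((Real.norm_eq_abs _).symm.trans_le (hM z w))
  have ha0 : (0 : ℝ) ≤ a z w := by exact_mod_cast (ha z w).1
  have ha1 : (a z w : ℝ) ≤ 1 := by exact_mod_cast (ha z w).2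
  have : |((⌊b z w⌋ + a z w : ℤ) : ℝ)| ≤ M + 2 := by
    push_cast
    rw [abs_le]
    constructor <;> linarith [Int.floor_le (b z w), Int.lt_floor_add_one (b z w)]
  rw [Int.norm_eq_abs]
  exact_mod_cast this

theorem ufBoundsZero_of_intCast {c : Z → ℤ} (h : UFBoundsZero fun z => (c z : ℝ)) :
    UFBoundsZero c := by
  obtain ⟨b, hbUF, hb⟩ := h
  have hfin := hbUF.2.2
  let nbrs z := (hfin z).toFinset
  have hsum : ∀ {R : Type} [NormedRing R] (x : Z → Z → R), (∀ z w, b z w = 0 → x z w = 0) →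
      ∀ z, ufBoundaryAt x z = ∑ w ∈ nbrs z, (x w z - x z w) := fun x hx z =>
    ufBoundaryAt_eq_sum fun w hw =>
      (hfin z).mem_toFinset.2 (hw.symm.imp (mt (hx z w)) (mt (hx w z)))
  have hc : ∀ z, (c z : ℝ) = ∑ w ∈ nbrs z, (b w z - b z w) := fun z =>
    (hb z).trans (hsum b (fun _ _ => id) z)
  let β z w := Int.fract (b z w)
  have hβ : ∀ z w, b z w = 0 → β z w = 0 := fun z w h => by simp [β, h]
  have hint : ∀ z, ufBoundaryAt β z ∈ AddSubgroup.zmultiples (1 : ℝ) := fun z => by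
    have : ufBoundaryAt β z = c z - ∑ w ∈ nbrs z, ((⌊b w z⌋ : ℝ) - ⌊b z w⌋) := by
      rw [hsum β hβ, hc, ← sum_sub_distrib]
      exact sum_congr rfl fun w _ => by simp only [β, Int.fract]; ring
    rw [this]
    exact sub_mem (AddSubgroup.intCast_mem_zmultiples_one _)
      (sum_mem fun w _ => by exact_mod_cast AddSubgroup.intCast_mem_zmultiples_one _)
  obtain ⟨a, ha01, hasupp, ha⟩ := exists_int_chain_boundary_eq
    (fun z w => ⟨Int.fract_nonneg _, (Int.fract_lt_one _).le⟩)
    (fun z => (hfin z).subset fun w hw => hw.imp (mt (hβ z w)) (mt (hβ w z))) hint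
  have ha0 : ∀ z w, b z w = 0 → a z w = 0 := fun z w h => hasupp z w (hβ z w h)
  refine ⟨_, isUFOneChain_floor_add hbUF ha01 ha0, fun z => ?_⟩
  have hfract := ha z
  rw [hsum a ha0, hsum β hβ] at hfract
  push_cast at hfract
  have : ((ufBoundaryAt (fun z w => ⌊b z w⌋ + a z w) z : ℤ) : ℝ) = c z := by
    have hterm : ∀ w, (((⌊b w z⌋ + a w z - (⌊b z w⌋ + a z w) : ℤ)) : ℝ) =
        (b w z - b z w) + ((a w z - a z w : ℝ) - (β w z - β z w)) := fun w => by
      simp only [β, Int.fract]; push_cast; ring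
    rw [hsum _ fun z w h => by simp [h, ha0 z w h], hc, Int.cast_sum,
      sum_congr rfl fun w _ => hterm w, sum_add_distrib, add_eq_left, sum_sub_distrib, hfract,
      sub_self]
  exact_mod_cast this.symm

end Injectivity

section Basin

variable {α : Type*} (f : α → α)

def basin (a : α) : Set α := {x | ∃ k, f^[k] x = a}

variable {f}

lemma mem_basin_self (a : α) : a ∈ basin f a := ⟨0, rfl⟩

lemma basin_subset_basin {a x : α} (hx : x ∈ basin f a) : basin f x ⊆ basin f a := by
  rintro y ⟨j, rfl⟩
  obtain ⟨k, rfl⟩ := hx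
  exact ⟨k + j, by rw [iterate_add_apply]⟩

lemma preimage_subset_basin (a : α) : f ⁻¹' {a} ⊆ basin f a := fun _ hx => ⟨1, hx⟩

lemma basin_eq_insert_biUnion (a : α) :
    basin f a = insert a (⋃ x ∈ f ⁻¹' {a} \ {a}, basin f x) := by
  refine subset_antisymm (fun x hx => ?_) ?_
  · obtain ⟨k, hk⟩ := hx
    induction k generalizing x with
    | zero => exact Or.inl hk
    | succ k ih =>
      rw [iterate_succ_apply] at hk
      rcases ih (f x) hk with h | h
      · by_cases hx : x = a
        · exact Or.inl hx
        · exact Or.inr (Set.mem_biUnion ⟨h, hx⟩ (mem_basin_self x))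
      · obtain ⟨y, hy, hxy⟩ := Set.mem_iUnion₂.1 h
        exact Or.inr (Set.mem_biUnion hy (basin_subset_basin hxy ⟨1, rfl⟩))
  · refine Set.insert_subset (mem_basin_self a) (Set.iUnion₂_subset fun x hx => ?_)
    exact basin_subset_basin (preimage_subset_basin a hx.1)

lemma apply_ne_self (hf : periodicPts f = ∅) (x : α) : f x ≠ x := fun h =>
  (Set.eq_empty_iff_forall_notMem.1 hf) x (mk_mem_periodicPts one_pos h)

lemma pairwiseDisjoint_basin (hf : periodicPts f = ∅) (a : α) :
    (f ⁻¹' {a}).PairwiseDisjoint (basin f) := by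
  -- a point flowing into two distinct preimages of `a` would make `a` periodic
  have key : ∀ {u x y : α} {i j : ℕ}, f^[i] u = x → f^[j] u = y → f x = a → f y = a → i ≤ j →
      x = y := by
    intro u x y i j hx hy hfx hfy hij
    obtain ⟨d, rfl⟩ := Nat.exists_eq_add_of_le hij
    have hxy : f^[d] x = y := by rw [← hx, ← iterate_add_apply, Nat.add_comm, hy]
    rcases Nat.eq_zero_or_pos d with rfl | hd
    · exact hxy
    · refine absurd (mk_mem_periodicPts hd ?_) (hf ▸ Set.notMem_empty a)
      rw [IsPeriodicPt, IsFixedPt, ← hfx, ← iterate_succ_apply, iterate_succ_apply', hxy, hfy, hfx]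
  intro x hx y hy hxy
  refine Set.disjoint_left.2 fun u ⟨i, hi⟩ ⟨j, hj⟩ => hxy ?_
  rcases le_total i j with h | h
  exacts [key hi hj hx hy h, (key hj hi hy hx h).symm]

lemma notMem_basin_of_apply_eq (hf : periodicPts f = ∅) {a x : α} (hx : f x = a) :
    a ∉ basin f x := fun ⟨k, hk⟩ =>
  absurd (mk_mem_periodicPts k.succ_pos
    (by rw [IsPeriodicPt, IsFixedPt, iterate_succ_apply', hk, hx])) (hf ▸ Set.notMem_empty a)

lemma finsum_mem_basin {M : Type*} [AddCommMonoid M] (hf : periodicPts f = ∅)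
    (hB : ∀ a, (basin f a).Finite) (c : α → M) (a : α) :
    ∑ᶠ x ∈ basin f a, c x = c a + ∑ᶠ x ∈ f ⁻¹' {a}, ∑ᶠ y ∈ basin f x, c y := by
  have hpre : f ⁻¹' {a} \ {a} = f ⁻¹' {a} :=
    Set.sdiff_singleton_eq_self fun h => apply_ne_self hf a h
  rw [basin_eq_insert_biUnion, hpre, finsum_mem_insert _ _ ((hB a).subset ?_),
    finsum_mem_biUnion (pairwiseDisjoint_basin hf a) ((hB a).subset (preimage_subset_basin a))
      fun x _ => hB x]
  · simp only [Set.mem_iUnion, not_exists]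
    exact fun x hx => notMem_basin_of_apply_eq hf hx
  · rw [basin_eq_insert_biUnion a, hpre]
    exact Set.subset_insert _ _

end Basin

lemma periodicPts_eq_empty_of_lt {α : Type*} {f : α → α} (Φ : α → ℤ) (hΦ : ∀ x, Φ x < Φ (f x)) :
    periodicPts f = ∅ := by
  refine Set.eq_empty_of_forall_notMem fun x ⟨n, hn, hx⟩ => ?_
  have : ∀ k, Φ x + k ≤ Φ (f^[k] x) := fun k => by
    induction k with
    | zero => simp
    | succ k ih => rw [iterate_succ_apply']; push_cast; linarith [hΦ (f^[k] x)]
  have := this n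
  rw [hx.eq] at this
  omega

namespace RayForest

variable {V : Type*} {G : SimpleGraph V}

lemma exists_adj_dist_add_one (hG : G.Connected) (v₀ : V) {v : V} (hv : v ≠ v₀) :
    ∃ u, G.Adj v u ∧ G.dist u v₀ + 1 = G.dist v v₀ := by
  obtain ⟨p, hp⟩ := hG.exists_walk_length_eq_dist v v₀
  cases p with
  | nil => exact absurd rfl hv
  | @cons _ u _ h q =>
    refine ⟨u, h, le_antisymm ?_ ?_⟩
    · simpa [← hp] using SimpleGraph.dist_le q
    · obtain ⟨r, hr⟩ := hG.exists_walk_length_eq_dist u v₀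
      simpa [hr] using SimpleGraph.dist_le (SimpleGraph.Walk.cons h r)

variable (hG : G.Connected) (v₀ : V)

open Classical in
noncomputable def parent (v : V) : V :=
  if hv : v = v₀ then v₀ else (exists_adj_dist_add_one hG v₀ hv).choose

variable {v₀}

lemma parent_root : parent hG v₀ v₀ = v₀ := dif_pos rfl

lemma adj_parent {v : V} (hv : v ≠ v₀) : G.Adj v (parent hG v₀ v) := by
  rw [parent, dif_neg hv]; exact (exists_adj_dist_add_one hG v₀ hv).choose_spec.1

lemma dist_parent {v : V} (hv : v ≠ v₀) : G.dist (parent hG v₀ v) v₀ + 1 = G.dist v v₀ := by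
  rw [parent, dif_neg hv]; exact (exists_adj_dist_add_one hG v₀ hv).choose_spec.2

lemma basin_parent_root : basin (parent hG v₀) v₀ = Set.univ := by
  refine Set.eq_univ_of_forall fun v => ⟨G.dist v v₀, ?_⟩
  induction h : G.dist v v₀ generalizing v with
  | zero => simpa using (hG.dist_eq_zero_iff.1 h)
  | succ n ih =>
    have hv : v ≠ v₀ := by rintro rfl; simp at h
    rw [iterate_succ_apply, ih]
    have := dist_parent hG hv
    omega

lemma exists_child (hfin : ∀ v, (G.neighborSet v).Finite) {v : V}
    (hv : (basin (parent hG v₀) v).Infinite) :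
    ∃ w, parent hG v₀ w = v ∧ w ≠ v ∧ (basin (parent hG v₀) w).Infinite := by
  have hkids : (parent hG v₀ ⁻¹' {v} \ {v}).Finite := (hfin v).subset fun w ⟨hw, hwv⟩ => by
    have hw₀ : w ≠ v₀ := by rintro rfl; exact hwv (hw.symm.trans (parent_root hG)).symm
    exact (hw ▸ adj_parent hG hw₀).symm
  rw [basin_eq_insert_biUnion] at hv
  by_contra! h
  exact hv (Set.finite_insert.2 (hkids.biUnion fun w ⟨hw, hwv⟩ => h w hw hwv))

variable (v₀) in
open Classical in
noncomputable def next (hfin : ∀ v, (G.neighborSet v).Finite) (v : V) : V :=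
  if hv : (basin (parent hG v₀) v).Infinite then (exists_child hG hfin hv).choose
  else parent hG v₀ v

variable (hfin : ∀ v, (G.neighborSet v).Finite) {v : V}

lemma next_of_infinite (hv : (basin (parent hG v₀) v).Infinite) :
    parent hG v₀ (next hG v₀ hfin v) = v ∧ next hG v₀ hfin v ≠ v ∧
      (basin (parent hG v₀) (next hG v₀ hfin v)).Infinite := by
  rw [next, dif_pos hv]; exact (exists_child hG hfin hv).choose_spec

lemma next_of_finite (hv : ¬(basin (parent hG v₀) v).Infinite) :
    next hG v₀ hfin v = parent hG v₀ v := dif_neg hv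

lemma ne_root_of_finite [Infinite V] (hv : ¬(basin (parent hG v₀) v).Infinite) : v ≠ v₀ := by
  rintro rfl
  exact hv (basin_parent_root hG ▸ Set.infinite_univ)

lemma next_ne_root_of_infinite (hv : (basin (parent hG v₀) v).Infinite) :
    next hG v₀ hfin v ≠ v₀ := fun h => by
  obtain ⟨hpar, hne, -⟩ := next_of_infinite hG hfin hv
  exact hne (h.trans (by rw [← hpar, h, parent_root]))

lemma adj_next [Infinite V] : G.Adj v (next hG v₀ hfin v) := by
  by_cases hv : (basin (parent hG v₀) v).Infinite
  · have := adj_parent hG (next_ne_root_of_infinite hG hfin hv)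
    rwa [(next_of_infinite hG hfin hv).1, SimpleGraph.adj_comm] at this
  · rw [next_of_finite hG hfin hv]
    exact adj_parent hG (ne_root_of_finite hG hv)

lemma dist_next_of_infinite (hv : (basin (parent hG v₀) v).Infinite) :
    G.dist (next hG v₀ hfin v) v₀ = G.dist v v₀ + 1 := by
  rw [← dist_parent hG (next_ne_root_of_infinite hG hfin hv), (next_of_infinite hG hfin hv).1]

lemma dist_next_of_finite [Infinite V] (hv : ¬(basin (parent hG v₀) v).Infinite) :
    G.dist (next hG v₀ hfin v) v₀ + 1 = G.dist v v₀ := by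
  rw [next_of_finite hG hfin hv]
  exact dist_parent hG (ne_root_of_finite hG hv)

lemma periodicPts_next [Infinite V] : periodicPts (next hG v₀ hfin) = ∅ := by
  classical
  -- distance to the root, counted positively on the rays to infinity and negatively elsewhere
  refine periodicPts_eq_empty_of_lt (fun v => if (basin (parent hG v₀) v).Infinite
    then (G.dist v v₀ : ℤ) else -G.dist v v₀) fun v => ?_
  by_cases hv : (basin (parent hG v₀) v).Infinite
  · simp only [hv, (next_of_infinite hG hfin hv).2.2, if_true, dist_next_of_infinite hG hfin hv]
    push_cast; omega
  · have h := dist_next_of_finite hG hfin hv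
    simp only [hv, if_false]
    split_ifs <;> omega

lemma basin_next_subset (hv : ¬(basin (parent hG v₀) v).Infinite) :
    basin (next hG v₀ hfin) v ⊆ basin (parent hG v₀) v := by
  rintro u ⟨k, hk⟩
  induction k generalizing u with
  | zero => exact ⟨0, hk⟩
  | succ k ih =>
    have hnext := ih (u := next hG v₀ hfin u) (by rwa [← iterate_succ_apply])
    by_cases hu : (basin (parent hG v₀) u).Infinite
    · exact absurd ((next_of_infinite hG hfin hu).2.2.mono (basin_subset_basin hnext)) hv
    · rw [next_of_finite hG hfin hu] at hnext
      exact basin_subset_basin hnext ⟨1, rfl⟩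

lemma basin_next_finite [Infinite V] (v : V) : (basin (next hG v₀ hfin) v).Finite := by
  induction hn : G.dist v v₀ using Nat.strong_induction_on generalizing v with
  | _ n ih =>
  have hkids : (next hG v₀ hfin ⁻¹' {v} \ {v}).Finite :=
    (hfin v).subset fun w hw => (hw.1 ▸ adj_next hG hfin).symm
  rw [basin_eq_insert_biUnion]
  refine Set.finite_insert.2 (hkids.biUnion fun w hw => ?_)
  by_cases hwI : (basin (parent hG v₀) w).Infinite
  · have := dist_next_of_infinite hG hfin hwI
    rw [show next hG v₀ hfin w = v from hw.1] at this
    exact ih _ (by omega) w rfl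
  · exact (Set.not_infinite.1 hwI).subset (basin_next_subset hG hfin hwI)

end RayForest

theorem exists_rayForest {V : Type*} [Infinite V] {G : SimpleGraph V} (hG : G.Connected)
    (hfin : ∀ v, (G.neighborSet v).Finite) :
    ∃ f : V → V, (∀ v, G.Adj v (f v)) ∧ (∀ v, (basin f v).Finite) ∧ periodicPts f = ∅ :=
  let v₀ := Classical.arbitrary V
  ⟨RayForest.next hG v₀ hfin, fun _ => RayForest.adj_next hG hfin,
    RayForest.basin_next_finite hG hfin, RayForest.periodicPts_next hG hfin⟩

section Forest

variable {Z : Type*} [MetricSpace Z] {R : Type*} [NormedRing R]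

open Classical in
noncomputable def graphChain (f : Z → Z) (x : Z → R) : Z → Z → R :=
  fun u w => if w = f u then x u else 0

lemma ufBoundaryAt_graphChain (f : Z → Z) (x : Z → R) (z : Z) (kids : Finset Z)
    (hkids : ∀ w, w ∈ kids ↔ f w = z) :
    ufBoundaryAt (graphChain f x) z = ∑ w ∈ kids, x w - x z := by
  unfold ufBoundaryAt graphChain
  rw [finsum_eq_single _ (f z) fun w hw => if_neg hw, if_pos rfl,
    finsum_eq_sum_of_support_subset _ fun w hw => mem_coe.2 ((hkids w).2 ?_)]
  · exact congrArg (· - x z) (sum_congr rfl fun w hw => if_pos ((hkids w).1 hw).symm)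
  · by_contra h
    exact hw (if_neg (Ne.symm h))

lemma isUFOneChain_graphChain {f : Z → Z} {ρ : ℝ} (hdist : ∀ z, dist z (f z) ≤ ρ)
    (hfin : ∀ z, (f ⁻¹' {z}).Finite) {x : Z → R} {M : ℝ} (hx : ∀ z, ‖x z‖ ≤ M) :
    IsUFOneChain (graphChain f x) := by
  classical
  refine ⟨⟨M, fun u w => ?_⟩, ⟨ρ, fun u w huw => ?_⟩, fun u => ?_⟩
  · unfold graphChain; split_ifs
    exacts [hx u, norm_zero.trans_le ((norm_nonneg _).trans (hx u))]
  · unfold graphChain at huw; split_ifs at huw with h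
    exacts [h ▸ hdist u, absurd rfl huw]
  · refine ((Set.finite_singleton (f u)).union (hfin u)).subset fun w hw => ?_
    unfold graphChain at hw
    rcases hw with h | h
    · exact Or.inl (by_contra fun h' => h (if_neg h'))
    · exact Or.inr (by_contra fun h' => h (if_neg (Ne.symm h')))

theorem exists_int_sub_ufBoundsZero {f : Z → Z} {ρ : ℝ} {N : ℕ} (hdist : ∀ z, dist z (f z) ≤ ρ)
    (hN : ∀ z, (f ⁻¹' {z}).ncard ≤ N) (hB : ∀ z, (basin f z).Finite) (hf : periodicPts f = ∅)
    {c : Z → ℝ} {K : ℝ} (hc : ∀ z, |c z| ≤ K) :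
    ∃ c' : Z → ℤ, (∃ K : ℤ, ∀ z, |c' z| ≤ K) ∧ UFBoundsZero fun z => c z - c' z := by
  have hkfin z : (f ⁻¹' {z}).Finite := (hB z).subset (preimage_subset_basin z)
  let kids z := (hkfin z).toFinset
  have hcard z : #(kids z) ≤ N := by rw [← Set.ncard_eq_toFinset_card _ (hkfin z)]; exact hN z
  let T z := ∑ᶠ w ∈ basin f z, c w
  have hT z : c z = T z - ∑ w ∈ kids z, T w := by
    rw [eq_sub_iff_add_eq, ← finsum_mem_eq_finite_toFinset_sum _ (hkfin z)]
    exact (finsum_mem_basin hf hB c z).symm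
  let c' z := ⌊T z⌋ - ∑ w ∈ kids z, ⌊T w⌋
  have hcc' z : c z - c' z = Int.fract (T z) - ∑ w ∈ kids z, Int.fract (T w) := by
    rw [hT]
    simp only [c', Int.fract, sum_sub_distrib]
    push_cast
    ring
  have hfr (x : ℝ) : 0 ≤ Int.fract x ∧ Int.fract x ≤ 1 :=
    ⟨Int.fract_nonneg x, (Int.fract_lt_one x).le⟩
  refine ⟨c', ⟨⌈K⌉ + N + 1, fun z => ?_⟩, graphChain f fun u => -Int.fract (T u),
    isUFOneChain_graphChain hdist hkfin fun u => by simpa [abs_of_nonneg (hfr _).1] using (hfr _).2,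
    fun z => ?_⟩
  · have hsum : ∑ w ∈ kids z, Int.fract (T w) ≤ N :=
      calc ∑ w ∈ kids z, Int.fract (T w) ≤ ∑ w ∈ kids z, (1 : ℝ) := sum_le_sum fun w _ => (hfr _).2
        _ ≤ N := by simpa using hcard z
    have := sum_nonneg fun w (_ : w ∈ kids z) => (hfr (T w)).1
    have := abs_le.1 (hc z)
    have := Int.le_ceil K
    have := hcc' z
    have : |(c' z : ℝ)| ≤ ⌈K⌉ + N + 1 := by
      rw [abs_le]; constructor <;> linarith [hfr (T z)]
    exact_mod_cast this
  · refine (hcc' z).trans ?_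
    rw [ufBoundaryAt_graphChain f _ z _ fun w => (hkfin z).mem_toFinset, sum_neg_distrib]
    ring

end Forest

section Rips

variable {Z : Type*} [MetricSpace Z]

def ripsGraph (r : ℝ) : SimpleGraph Z := SimpleGraph.fromRel fun a b => dist a b < r

lemma dist_lt_of_ripsGraph_adj {r : ℝ} {a b : Z} (h : (ripsGraph r).Adj a b) : dist a b < r :=
  h.2.elim id fun h => dist_comm a b ▸ h

lemma ripsGraph_connected [Nonempty Z] {r : ℝ}
    (h : ∀ x y : Z, Relation.ReflTransGen (fun a b => dist a b < r) x y) :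
    (ripsGraph r : SimpleGraph Z).Connected := by
  refine (SimpleGraph.connected_iff _).2 ⟨fun x y => ?_, inferInstance⟩
  induction h x y with
  | refl => rfl
  | @tail a b _ hab ih =>
    rcases eq_or_ne a b with rfl | hne
    exacts [ih, ih.trans (SimpleGraph.Adj.reachable ⟨hne, Or.inl hab⟩)]

theorem exists_int_sub_ufBoundsZero_of_coarselyConnected [Infinite Z] (hcc : CoarselyConnected Z)
    (hbg : BoundedGeometry Z) {c : Z → ℝ} {K : ℝ} (hc : ∀ z, |c z| ≤ K) :
    ∃ c' : Z → ℤ, (∃ K : ℤ, ∀ z, |c' z| ≤ K) ∧ UFBoundsZero fun z => c z - c' z := by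
  obtain ⟨r, -, hr⟩ := hcc
  obtain ⟨N, hN⟩ := hbg r
  have hball z : (ripsGraph r : SimpleGraph Z).neighborSet z ⊆ {w | dist w z ≤ r} := fun w hw =>
    (dist_comm w z ▸ dist_lt_of_ripsGraph_adj hw).le
  obtain ⟨f, hadj, hB, hf⟩ :=
    exists_rayForest (ripsGraph_connected hr) fun z => (hN z).1.subset (hball z)
  have hpre z : f ⁻¹' {z} ⊆ {w | dist w z ≤ r} := fun w hw =>
    (dist_lt_of_ripsGraph_adj (hw ▸ hadj w)).le
  exact exists_int_sub_ufBoundsZero (fun z => (dist_lt_of_ripsGraph_adj (hadj z)).le)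
    (fun z => (Set.ncard_le_ncard (hpre z) (hN z).1).trans (hN z).2) hB hf hc

end Rips

end UFHomology

theorem stmt13_general {Z : Type*} [MetricSpace Z] (hinf : Infinite Z)
    (hcc : CoarselyConnected Z)
    (hbg : BoundedGeometry Z) :
    (∀ c : Z → ℤ, (∃ K : ℤ, ∀ z, |c z| ≤ K) →
      UFBoundsZero (fun z => (c z : ℝ)) → UFBoundsZero c) ∧
    (∀ c : Z → ℝ, (∃ K : ℝ, ∀ z, |c z| ≤ K) →
      ∃ c' : Z → ℤ, (∃ K : ℤ, ∀ z, |c' z| ≤ K) ∧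
        UFBoundsZero (fun z => c z - (c' z : ℝ))) :=
  ⟨fun _ _ => UFHomology.ufBoundsZero_of_intCast,
    fun _ ⟨_, hK⟩ => UFHomology.exists_int_sub_ufBoundsZero_of_coarselyConnected hcc hbg hK⟩

/-- For an infinite, coarsely connected, uniformly discrete space of bounded
geometry, `H₀^{uf}(Z; ℤ) → H₀^{uf}(Z; ℝ)` is an isomorphism: injective (an integer
cycle bounding over `ℝ` bounds over `ℤ`) and surjective (every bounded real
0-chain differs from an integer one by a real boundary). -/
theorem stmt13 {Z : Type*} [MetricSpace Z] (hinf : Infinite Z)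
    (hcc : CoarselyConnected Z)
    (hud : UniformlyDiscrete Z) (hbg : BoundedGeometry Z) :
    (∀ c : Z → ℤ, (∃ K : ℤ, ∀ z, |c z| ≤ K) →
      UFBoundsZero (fun z => (c z : ℝ)) → UFBoundsZero c) ∧
    (∀ c : Z → ℝ, (∃ K : ℝ, ∀ z, |c z| ≤ K) →
      ∃ c' : Z → ℤ, (∃ K : ℤ, ∀ z, |c' z| ≤ K) ∧
        UFBoundsZero (fun z => c z - (c' z : ℝ))) :=
  stmt13_general hinf hcc hbg
end
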